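/- arXiv:1406.6257 — 6 statements merged into one kernel-verified Lean document; each statement's English description precedes it below -/
import Mathlib

section
/- Let H be a real Hilbert space, let V be a closed vector subspace of H with orthogonal projection P_V and orthogonal complement V⊥, and let A : H → 2^H be a set-valued operator. Then P_V ∘ (A + N_V)⁻¹ ∘ P_V = P_V ∘ (A_{V⊥} + N_V) ∘ P_V; that is, for all x, u ∈ H one has u ∈ P_V[(A + N_V)⁻¹(P_V x)] if and only if u ∈ P_V[(A_{V⊥} + N_V)(P_V x)], where P_V[S] denotes the image of a set S under P_V. -/
/-!
Write `P` and `Q` for the orthogonal projections onto `V` and `Vᗮ`, and let `p = P x ∈ V`. The map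
`y ↦ (P y, Q y)` identifies `H` with `V × Vᗮ`, and `P` kills the normal cone `N_V p = Vᗮ`.
Both sides then reduce to the same set: `u` belongs to either one exactly when `u ∈ V` and
`b + p ∈ A u` for some `b ∈ Vᗮ`. On the left `b` is minus the normal-cone component of `p`;
on the right `b = Q y`, because `y ∈ A_{Vᗮ} p` reads `Q y + p ∈ A (P y)`.
-/

open scoped Pointwise RealInnerProductSpace

noncomputable section

variable {H : Type*} [NormedAddCommGroup H] [InnerProductSpace ℝ H] [CompleteSpace H]

/-- The set-valued inverse: `x ∈ A⁻¹ u ↔ u ∈ A x`. -/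
def SVInv (A : H → Set H) : H → Set H := fun u => {x | u ∈ A x}

/-- The partial inverse of `A` with respect to the closed subspace `V`:
`y ∈ A_V x ↔ P_V y + P_{V⊥} x ∈ A (P_V x + P_{V⊥} y)`. -/
def partialInv (V : Submodule ℝ H) [Submodule.HasOrthogonalProjection V] (A : H → Set H) :
    H → Set H := fun x =>
  {y | (Submodule.orthogonalProjectionOnto V y : H) + (Submodule.orthogonalProjectionOnto Vᗮ x : H)
      ∈ A ((Submodule.orthogonalProjectionOnto V x : H) + (Submodule.orthogonalProjectionOnto Vᗮ y : H))}

/-- The normal cone to the closed subspace `V`: `N_V x = V⊥` if `x ∈ V`, `∅` otherwise. -/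
def normalConeSub (V : Submodule ℝ H) : H → Set H := fun x =>
  {u | x ∈ V ∧ u ∈ Vᗮ}

namespace Submodule

variable {𝕜 E : Type*} [RCLike 𝕜] [NormedAddCommGroup E] [InnerProductSpace 𝕜 E]
  (K : Submodule 𝕜 E) [K.HasOrthogonalProjection]

theorem starProjection_orthogonal_orthogonal : Kᗮᗮ.starProjection = K.starProjection := by
  rw [starProjection_orthogonal', starProjection_orthogonal', sub_sub_cancel]

theorem image_starProjection_add_orthogonal (S : Set E) :
    K.starProjection '' (S + Kᗮ) = K.starProjection '' S := by
  have h_orth : K.starProjection '' (Kᗮ : Set E) = 0 := by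
    ext v
    simp only [Set.mem_image, SetLike.mem_coe, Set.mem_zero]
    refine ⟨?_, fun hv => ⟨0, Kᗮ.zero_mem, by rw [hv, map_zero]⟩⟩
    rintro ⟨w, hw, rfl⟩
    exact (K.starProjection_apply_eq_zero_iff).2 hw
  rw [Set.image_add, h_orth, add_zero]

theorem image_starProjection_setOf_starProjection (R : E → E → Prop) :
    K.starProjection '' {y | R (K.starProjection y) (Kᗮ.starProjection y)} =
      {u | u ∈ K ∧ ∃ b ∈ Kᗮ, R u b} := by
  ext u
  constructor
  · rintro ⟨y, hy, rfl⟩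
    exact ⟨K.starProjection_apply_mem y, _, Kᗮ.starProjection_apply_mem y, hy⟩
  · rintro ⟨hu, b, hb, h⟩
    have hPu : K.starProjection (u + b) = u := eq_starProjection_of_mem_orthogonal' hu hb rfl
    have hQb : Kᗮ.starProjection (u + b) = b :=
      eq_starProjection_of_mem_orthogonal' hb (K.le_orthogonal_orthogonal hu) (add_comm u b)
    exact ⟨u + b, by rwa [Set.mem_ofPred_eq, hPu, hQb], hPu⟩

end Submodule

section PartialInverse

variable {E : Type*} [NormedAddCommGroup E] [InnerProductSpace ℝ E]
  (V : Submodule ℝ E) (A : E → Set E) {p : E}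

theorem normalConeSub_of_mem (hp : p ∈ V) : normalConeSub V p = Vᗮ := by
  ext u
  simp [normalConeSub, hp]

theorem partialInv_orthogonal_of_mem [V.HasOrthogonalProjection] (hp : p ∈ V) :
    partialInv Vᗮ A p = {y | Vᗮ.starProjection y + p ∈ A (V.starProjection y)} := by
  ext y
  simp only [partialInv, Set.mem_ofPred_eq, Submodule.coe_orthogonalProjectionOnto_apply,
    Submodule.starProjection_orthogonal_orthogonal, Submodule.starProjection_eq_self_iff.2 hp,
    Submodule.starProjection_orthogonal_apply_eq_zero hp, zero_add]

theorem image_starProjection_SVInv_add_normalConeSub [V.HasOrthogonalProjection] :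
    V.starProjection '' SVInv (fun w => A w + normalConeSub V w) p =
      {u | u ∈ V ∧ ∃ b ∈ Vᗮ, b + p ∈ A u} := by
  ext u
  constructor
  · rintro ⟨z, ⟨a, ha, n, ⟨hz, hn⟩, rfl⟩, rfl⟩
    rw [Submodule.starProjection_eq_self_iff.2 hz]
    exact ⟨hz, -n, Vᗮ.neg_mem hn, (neg_add_cancel_comm_assoc n a).symm ▸ ha⟩
  · rintro ⟨hu, b, hb, h⟩
    refine ⟨u, ⟨b + p, h, -b, ⟨hu, Vᗮ.neg_mem hb⟩, add_neg_cancel_comm b p⟩, ?_⟩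
    exact Submodule.starProjection_eq_self_iff.2 hu

end PartialInverse

theorem stmt1 (V : Submodule ℝ H) [CompleteSpace V] (A : H → Set H) :
    ∀ x u : H,
      u ∈ (Submodule.orthogonalProjectionOnto V · : H → H) ''
            (SVInv (fun w => A w + normalConeSub V w) (Submodule.orthogonalProjectionOnto V x : H)) ↔
      u ∈ (Submodule.orthogonalProjectionOnto V · : H → H) ''
            (partialInv Vᗮ A (Submodule.orthogonalProjectionOnto V x : H) +
              normalConeSub V (Submodule.orthogonalProjectionOnto V x : H)) := by
  intro x u
  have hp : V.starProjection x ∈ V := V.starProjection_apply_mem x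
  simp only [Submodule.coe_orthogonalProjectionOnto_apply]
  rw [image_starProjection_SVInv_add_normalConeSub, normalConeSub_of_mem V hp,
    Submodule.image_starProjection_add_orthogonal, partialInv_orthogonal_of_mem V A hp,
    Submodule.image_starProjection_setOf_starProjection V fun u b => b + _ ∈ A u]
end
end

section
/- Let H be a real Hilbert space, let 𝒜 : H → 2^H be maximally monotone, and let ℬ : H → H be monotone and η-Lipschitzian for some η > 0, with zer(𝒜 + ℬ) ≠ ∅. Let z₀ ∈ H, let ε ∈ (0, max{1, 1/(2η)}), let (δₙ) be a sequence in [ε, 1/η − ε], let (λₙ) be a sequence in [ε, 1], and define, for every n ∈ ℕ: rₙ = zₙ − δₙ ℬzₙ, sₙ = J_{δₙ𝒜} rₙ, tₙ = sₙ − δₙ ℬsₙ, z_{n+1} = zₙ + λₙ(tₙ − rₙ). Then (zₙ) converges weakly to some z̄ ∈ zer(𝒜 + ℬ), and z_{n+1} − zₙ → 0 in norm. -/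
/-!
For a zero `q` of `𝒜 + ℬ`, monotonicity and the Lipschitz bound give the Fejér inequality
`‖z (n+1) - q‖² + λₙ (1 - (δₙ η)²) ‖zₙ - sₙ‖² ≤ ‖zₙ - q‖²`, whose coefficient the step-size
bounds keep above `ε² η`. Hence `zₙ - sₙ → 0`, so `z (n+1) - zₙ → 0` and `(𝒜 + ℬ) sₙ` contains
vectors tending to `0`. The operator `𝒜 + ℬ` is maximally monotone (Minty's theorem for `𝒜`
plus Banach's fixed point theorem), so its graph is closed under weak × strong limits and every
weak cluster point of `(zₙ)` is a zero. Opial's argument then yields weak convergence of the whole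
sequence: cluster points are taken along ultrafilters, where `w ↦ lim ⟪zₙ, w⟫` is a bounded linear
functional with a Riesz representative. Minty's theorem itself comes from minimising the
Fitzpatrick function of `𝒜` plus `½‖·‖²` on `H × H`.
-/

open scoped Pointwise RealInnerProductSpace Topology
open Filter
open scoped NNReal

noncomputable section

variable {H : Type*} [NormedAddCommGroup H] [InnerProductSpace ℝ H] [CompleteSpace H]

/-- A set-valued operator is monotone. -/
def MonotoneSV (A : H → Set H) : Prop :=
  ∀ ⦃x y u v : H⦄, u ∈ A x → v ∈ A y → 0 ≤ ⟪x - y, u - v⟫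

/-- A set-valued operator is maximally monotone: it is monotone and its graph is not
properly contained in the graph of a monotone operator. -/
def MaxMonotone (A : H → Set H) : Prop :=
  MonotoneSV A ∧ ∀ x u : H, (∀ y v, v ∈ A y → 0 ≤ ⟪x - y, u - v⟫) → u ∈ A x

section Minimization

variable {F : Type*} [NormedAddCommGroup F] [InnerProductSpace ℝ F]

lemma cauchySeq_of_dist_sq_le {X : Type*} [PseudoMetricSpace X] {x : ℕ → X} {e : ℕ → ℝ}
    (he : Tendsto e atTop (𝓝 0)) (h : ∀ k l, dist (x k) (x l) ^ 2 ≤ e k + e l) :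
    CauchySeq x := by
  refine Metric.cauchySeq_iff.2 fun r hr => ?_
  obtain ⟨N, hN⟩ :=
    eventually_atTop.mp (he.eventually (gt_mem_nhds (by positivity : 0 < r ^ 2 / 2)))
  refine ⟨N, fun k hk l hl => ?_⟩
  nlinarith [h k l, hN k hk, hN l hl, dist_nonneg (x := x k) (y := x l)]

lemma norm_half_smul_add_sq (a b : F) :
    ‖(1 / 2 : ℝ) • a + (1 / 2 : ℝ) • b‖ ^ 2 = (‖a‖ ^ 2 + ‖b‖ ^ 2) / 2 - ‖a - b‖ ^ 2 / 4 := by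
  rw [← smul_add, norm_smul, mul_pow, norm_add_sq_real]
  have := norm_sub_sq_real a b
  norm_num
  linarith

lemma Convex.exists_isMinOn_snd_add_norm_sq [CompleteSpace F] {K : Set (F × ℝ)}
    (hne : K.Nonempty) (hconv : Convex ℝ K) (hcl : IsClosed K)
    (hbdd : BddBelow ((fun a => a.2 + ‖a.1‖ ^ 2 / 2) '' K)) :
    ∃ a ∈ K, IsMinOn (fun a => a.2 + ‖a.1‖ ^ 2 / 2) K a := by
  set φ : F × ℝ → ℝ := fun a => a.2 + ‖a.1‖ ^ 2 / 2
  set μ := sInf (φ '' K)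
  have hμ : ∀ b ∈ K, μ ≤ φ b := fun b hb => csInf_le hbdd ⟨b, hb, rfl⟩
  obtain ⟨v, -, hvμ, hvK⟩ : ∃ v : ℕ → ℝ, Antitone v ∧ Tendsto v atTop (𝓝 μ) ∧ ∀ k, v k ∈ φ '' K :=
    exists_seq_tendsto_sInf (hne.image φ) hbdd
  choose a haK hav using hvK
  have hdist : ∀ k l, dist (a k).1 (a l).1 ^ 2 ≤ 4 * (v k - μ) + 4 * (v l - μ) := by
    intro k l
    have hmid := hμ _ (hconv (haK k) (haK l) (by norm_num) (by norm_num) (add_halves 1))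
    have hk := hav k
    have hl := hav l
    simp only [φ, Prod.fst_add, Prod.snd_add, Prod.smul_fst, Prod.smul_snd, smul_eq_mul,
      norm_half_smul_add_sq] at hmid hk hl
    rw [dist_eq_norm]
    linarith
  have hfst : CauchySeq fun k => (a k).1 :=
    cauchySeq_of_dist_sq_le
      (by simpa using ((hvμ.sub_const μ).const_mul 4 : Tendsto _ _ (𝓝 (4 * (μ - μ))))) hdist
  obtain ⟨p, hp⟩ := cauchySeq_tendsto_of_complete hfst
  have hsnd : Tendsto (fun k => (a k).2) atTop (𝓝 (μ - ‖p‖ ^ 2 / 2)) := by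
    have : (fun k => (a k).2) = fun k => v k - ‖(a k).1‖ ^ 2 / 2 := by
      funext k; rw [← hav]; ring
    rw [this]
    exact hvμ.sub ((hp.norm.pow 2).div_const 2)
  have hmem : (p, μ - ‖p‖ ^ 2 / 2) ∈ K :=
    hcl.mem_of_tendsto (hp.prodMk_nhds hsnd) (Eventually.of_forall haK)
  refine ⟨_, hmem, fun b hb => ?_⟩
  simpa [φ] using hμ b hb

lemma IsMinOn.snd_add_inner_nonneg {K : Set (F × ℝ)} (hconv : Convex ℝ K) {a b : F × ℝ}
    (hmin : IsMinOn (fun a => a.2 + ‖a.1‖ ^ 2 / 2) K a) (ha : a ∈ K) (hb : b ∈ K) :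
    0 ≤ b.2 - a.2 + ⟪a.1, b.1 - a.1⟫ := by
  set B := b.2 - a.2 + ⟪a.1, b.1 - a.1⟫
  set C := ‖b.1 - a.1‖ ^ 2 / 2
  have hseg : ∀ t ∈ Set.Ioc (0 : ℝ) 1, 0 ≤ B + t * C := by
    rintro t ⟨ht0, ht1⟩
    have := isMinOn_iff.mp hmin _ (hconv.add_smul_sub_mem ha hb ⟨ht0.le, ht1⟩)
    simp only [Prod.fst_add, Prod.snd_add, Prod.smul_fst, Prod.smul_snd,
      Prod.fst_sub, Prod.snd_sub, smul_eq_mul] at this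
    rw [norm_add_sq_real, norm_smul, real_inner_smul_right, mul_pow, Real.norm_eq_abs, sq_abs]
      at this
    refine (mul_nonneg_iff_of_pos_left ht0).mp ?_
    simp only [B, C]
    linarith
  have hlim : Tendsto (fun t => B + t * C) (𝓝[>] 0) (𝓝 B) := by
    simpa using ((continuous_const.add (continuous_id.mul continuous_const)).tendsto 0).mono_left
      nhdsWithin_le_nhds (f := fun t : ℝ => B + t * C)
  exact ge_of_tendsto hlim (eventually_of_mem (Ioc_mem_nhdsGT one_pos) hseg)

end Minimization

section MaximalMonotone

variable {E : Type*} [NormedAddCommGroup E] [InnerProductSpace ℝ E]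

def fitzpatrickEpigraph (A : E → Set E) : Set (WithLp 2 (E × E) × ℝ) :=
  {a | ∀ y v, v ∈ A y → ⟪a.1.fst, v⟫ + ⟪y, a.1.snd⟫ - ⟪y, v⟫ ≤ a.2}

lemma convex_fitzpatrickEpigraph (A : E → Set E) : Convex ℝ (fitzpatrickEpigraph A) := by
  intro a ha b hb s t hs ht hst y v hv
  have h1 := mul_le_mul_of_nonneg_left (ha y v hv) hs
  have h2 := mul_le_mul_of_nonneg_left (hb y v hv) ht
  simp only [Prod.fst_add, Prod.snd_add, Prod.smul_fst, Prod.smul_snd, WithLp.add_fst,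
    WithLp.add_snd, WithLp.smul_fst, WithLp.smul_snd, inner_add_left, inner_add_right,
    real_inner_smul_left, real_inner_smul_right, smul_eq_mul]
  linear_combination h1 + h2 + ⟪y, v⟫ * hst

lemma isClosed_fitzpatrickEpigraph (A : E → Set E) : IsClosed (fitzpatrickEpigraph A) := by
  simp only [fitzpatrickEpigraph, Set.ofPred_forall]
  refine isClosed_iInter fun y => isClosed_iInter fun v => isClosed_iInter fun _ => ?_
  exact isClosed_le (by fun_prop) (by fun_prop)

lemma MonotoneSV.mem_fitzpatrickEpigraph {A : E → Set E} (hA : MonotoneSV A) {x u : E}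
    (hu : u ∈ A x) : (WithLp.toLp 2 (x, u), ⟪x, u⟫) ∈ fitzpatrickEpigraph A := by
  intro y v hv
  have := hA hu hv
  simp only [inner_sub_left, inner_sub_right] at this
  simp only [WithLp.toLp_fst, WithLp.toLp_snd]
  linarith

lemma MaxMonotone.inner_le_of_mem_fitzpatrickEpigraph {A : E → Set E} (hA : MaxMonotone A)
    {a : WithLp 2 (E × E) × ℝ} (ha : a ∈ fitzpatrickEpigraph A) : ⟪a.1.fst, a.1.snd⟫ ≤ a.2 := by
  by_cases hmem : a.1.snd ∈ A a.1.fst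
  · simpa using ha _ _ hmem
  · obtain ⟨y, v, hv, hlt⟩ : ∃ y v, v ∈ A y ∧ ⟪a.1.fst - y, a.1.snd - v⟫ < 0 := by
      by_contra! h
      exact hmem (hA.2 _ _ h)
    have := ha y v hv
    simp only [inner_sub_left, inner_sub_right] at hlt
    linarith

lemma MaxMonotone.exists_neg_mem [CompleteSpace E] {A : E → Set E} (hA : MaxMonotone A) :
    ∃ x, -x ∈ A x := by
  have hgraph : ∃ x u, u ∈ A x := by
    by_contra! h
    exact h 0 0 (hA.2 0 0 fun y v hv => absurd hv (h y v))
  obtain ⟨x₀, u₀, hu₀⟩ := hgraph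
  have hbdd : BddBelow ((fun a => a.2 + ‖a.1‖ ^ 2 / 2) '' fitzpatrickEpigraph A) := by
    refine ⟨0, ?_⟩
    rintro _ ⟨a, ha, rfl⟩
    have := hA.inner_le_of_mem_fitzpatrickEpigraph ha
    have := norm_add_sq_real a.1.fst a.1.snd
    simp only [WithLp.prod_norm_sq_eq_of_L2]
    nlinarith [sq_nonneg ‖a.1.fst + a.1.snd‖]
  obtain ⟨⟨⟨⟨x, u⟩⟩, c⟩, haK, hmin⟩ := Convex.exists_isMinOn_snd_add_norm_sq
    ⟨_, hA.1.mem_fitzpatrickEpigraph hu₀⟩ (convex_fitzpatrickEpigraph A)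
    (isClosed_fitzpatrickEpigraph A) hbdd
  -- the first-order condition at the minimizer, tested against the graph of `A`
  have hvar : ∀ y v, v ∈ A y → ‖x + u‖ ^ 2 ≤ ⟪-u - y, -x - v⟫ := by
    intro y v hv
    have h1 := hmin.snd_add_inner_nonneg (convex_fitzpatrickEpigraph A) haK
      (hA.1.mem_fitzpatrickEpigraph hv)
    have h2 := hA.inner_le_of_mem_fitzpatrickEpigraph haK
    simp only [WithLp.prod_inner_apply, WithLp.toLp_fst, WithLp.toLp_snd, inner_sub_right,
      real_inner_self_eq_norm_sq] at h1 h2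
    rw [norm_add_sq_real]
    simp only [inner_sub_left, inner_sub_right, inner_neg_left, inner_neg_right,
      real_inner_comm x y, real_inner_comm u x] at h1 h2 ⊢
    linarith
  have hmem : -x ∈ A (-u) := hA.2 _ _ fun y v hv => (sq_nonneg _).trans (hvar y v hv)
  obtain rfl : x = -u := eq_neg_of_add_eq_zero_left (by simpa using hvar _ _ hmem)
  exact ⟨-u, hmem⟩

lemma MaxMonotone.comp_add_right {A : E → Set E} (hA : MaxMonotone A) (w : E) :
    MaxMonotone fun y => A (y + w) := by
  refine ⟨fun x y u v hu hv => by simpa using hA.1 hu hv, fun x u h => hA.2 _ _ fun y v hv => ?_⟩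
  simpa [sub_sub_eq_add_sub] using h (y - w) v (by simpa using hv)

lemma MaxMonotone.smul {A : E → Set E} (hA : MaxMonotone A) {δ : ℝ} (hδ : 0 < δ) :
    MaxMonotone fun y => δ • A y := by
  refine ⟨?_, fun x u h => ?_⟩
  · rintro x y _ _ ⟨u, hu, rfl⟩ ⟨v, hv, rfl⟩
    rw [← smul_sub, real_inner_smul_right]
    exact mul_nonneg hδ.le (hA.1 hu hv)
  · refine ⟨δ⁻¹ • u, hA.2 _ _ fun y v hv => ?_, smul_inv_smul₀ hδ.ne' u⟩
    have := h y (δ • v) (Set.smul_mem_smul_set hv)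
    rw [← inv_smul_smul₀ hδ.ne' v, ← smul_sub, real_inner_smul_right]
    exact mul_nonneg (inv_nonneg.2 hδ.le) this

lemma MaxMonotone.exists_sub_mem [CompleteSpace E] {A : E → Set E} (hA : MaxMonotone A) (w : E) :
    ∃ x, w - x ∈ A x := by
  obtain ⟨y, hy⟩ := (hA.comp_add_right w).exists_neg_mem
  exact ⟨y + w, by simpa using hy⟩

lemma MonotoneSV.norm_sub_le_of_sub_mem {A : E → Set E} (hA : MonotoneSV A) {p p' x x' : E}
    (hx : p - x ∈ A x) (hx' : p' - x' ∈ A x') : ‖x - x'‖ ≤ ‖p - p'‖ := by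
  have hmono := hA hx hx'
  have hsplit : (p - x) - (p' - x') = (p - p') - (x - x') := by abel
  rw [hsplit, inner_sub_right, real_inner_self_eq_norm_sq] at hmono
  have := real_inner_le_norm (x - x') (p - p')
  nlinarith [norm_nonneg (x - x'), norm_nonneg (p - p')]

lemma MonotoneSV.add_singleton {A : E → Set E} (hA : MonotoneSV A) {B : E → E}
    (hB : ∀ x y, 0 ≤ ⟪x - y, B x - B y⟫) : MonotoneSV fun x => A x + {B x} := by
  rintro x y _ _ ⟨u, hu, _, rfl, rfl⟩ ⟨v, hv, _, rfl, rfl⟩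
  have h := hA hu hv
  have h' := hB x y
  rw [add_sub_add_comm, inner_add_right]
  positivity

lemma MonotoneSV.maxMonotone_of_forall_exists_sub_mem {A : E → Set E} (hA : MonotoneSV A)
    (hsurj : ∀ w, ∃ x, w - x ∈ A x) : MaxMonotone A := by
  refine ⟨hA, fun x u h => ?_⟩
  obtain ⟨a, ha⟩ := hsurj (x + u)
  have := h a _ ha
  rw [show u - (x + u - a) = -(x - a) by abel, inner_neg_right, real_inner_self_eq_norm_sq] at this
  obtain rfl : x = a := sub_eq_zero.mp (norm_eq_zero.mp (by nlinarith [norm_nonneg (x - a)]))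
  simpa using ha

lemma norm_sub_smul_add_sub_le {B : E → E} {K : ℝ≥0} (hBmono : ∀ x y, 0 ≤ ⟪x - y, B x - B y⟫)
    (hB : LipschitzWith K B) {δ : ℝ} (hδ : 0 ≤ δ) (hδK : δ * (1 + K) ^ 2 ≤ 1) (a b : E) :
    ‖(a - δ • (a + B a)) - (b - δ • (b + B b))‖ ≤ (1 - δ / 2) * ‖a - b‖ := by
  have hsplit : (a - δ • (a + B a)) - (b - δ • (b + B b)) =
      (a - b) - δ • ((a - b) + (B a - B b)) := by module
  have hmono : ‖a - b‖ ^ 2 ≤ ⟪a - b, (a - b) + (B a - B b)⟫ := by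
    rw [inner_add_right, real_inner_self_eq_norm_sq]
    linarith [hBmono a b]
  have hlip : ‖(a - b) + (B a - B b)‖ ≤ (1 + K) * ‖a - b‖ :=
    (norm_add_le _ _).trans (by linarith [hB.norm_sub_le a b])
  have hδ1 : δ ≤ 1 := by nlinarith [sq_nonneg (K : ℝ), K.coe_nonneg]
  have hsq : ‖(a - b) - δ • ((a - b) + (B a - B b))‖ ^ 2 ≤ ((1 - δ / 2) * ‖a - b‖) ^ 2 := by
    rw [norm_sub_sq_real, norm_smul, real_inner_smul_right, Real.norm_of_nonneg hδ, mul_pow,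
      mul_pow]
    have h1 := mul_le_mul_of_nonneg_left hmono hδ
    have h2 := mul_le_mul_of_nonneg_left (pow_le_pow_left₀ (norm_nonneg _) hlip 2) (sq_nonneg δ)
    have h3 := mul_le_mul_of_nonneg_right (mul_le_mul_of_nonneg_left hδK hδ) (sq_nonneg ‖a - b‖)
    nlinarith [mul_nonneg (sq_nonneg δ) (sq_nonneg ‖a - b‖)]
  rw [hsplit]
  exact (pow_le_pow_iff_left₀ (norm_nonneg _) (by nlinarith [norm_nonneg (a - b)])
    two_ne_zero).mp hsq

lemma MaxMonotone.exists_sub_mem_add_singleton [CompleteSpace E] {A : E → Set E}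
    (hA : MaxMonotone A) {B : E → E} {K : ℝ≥0} (hBmono : ∀ x y, 0 ≤ ⟪x - y, B x - B y⟫)
    (hB : LipschitzWith K B) (w : E) : ∃ x, w - x ∈ A x + {B x} := by
  set δ : ℝ := ((1 + K) ^ 2)⁻¹
  have hδ : 0 < δ := by positivity
  have hδK : δ * (1 + K) ^ 2 ≤ 1 := (inv_mul_cancel₀ (by positivity)).le
  have hδ1 : δ ≤ 1 := inv_le_one_of_one_le₀ (one_le_pow₀ (le_add_of_nonneg_right K.coe_nonneg))
  choose J hJ using (hA.smul hδ).exists_sub_mem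
  -- a fixed point of `T` solves `w ∈ a + A a + B a`
  set T : E → E := fun a => J (a - δ • (a + B a - w))
  have hT : ContractingWith (1 - δ / 2).toNNReal T := by
    refine ⟨by simpa [Real.toNNReal_lt_one] using hδ, LipschitzWith.of_dist_le_mul fun a b => ?_⟩
    rw [dist_eq_norm, dist_eq_norm, Real.coe_toNNReal _ (by linarith)]
    calc ‖T a - T b‖ ≤ ‖(a - δ • (a + B a - w)) - (b - δ • (b + B b - w))‖ :=
          (hA.smul hδ).1.norm_sub_le_of_sub_mem (hJ _) (hJ _)
      _ = ‖(a - δ • (a + B a)) - (b - δ • (b + B b))‖ := by congr 1; module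
      _ ≤ (1 - δ / 2) * ‖a - b‖ := norm_sub_smul_add_sub_le hBmono hB hδ.le hδK a b
  obtain ⟨a, ha, -⟩ := hT.exists_fixedPoint 0 (edist_ne_top _ _)
  have hmem := hJ (a - δ • (a + B a - w))
  rw [show J (a - δ • (a + B a - w)) = a from ha,
    show a - δ • (a + B a - w) - a = δ • (w - a - B a) by module,
    Set.smul_mem_smul_set_iff₀ hδ.ne'] at hmem
  exact ⟨a, _, hmem, _, rfl, sub_add_cancel _ _⟩

lemma MaxMonotone.add_singleton [CompleteSpace E] {A : E → Set E} (hA : MaxMonotone A)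
    {B : E → E} {K : ℝ≥0} (hBmono : ∀ x y, 0 ≤ ⟪x - y, B x - B y⟫) (hB : LipschitzWith K B) :
    MaxMonotone fun x => A x + {B x} :=
  (hA.1.add_singleton hBmono).maxMonotone_of_forall_exists_sub_mem
    (hA.exists_sub_mem_add_singleton hBmono hB)

end MaximalMonotone

section Fejer

variable {E : Type*} [NormedAddCommGroup E]

def FejerMonotone (z : ℕ → E) (C : Set E) : Prop :=
  ∀ q ∈ C, ∀ n, ‖z (n + 1) - q‖ ≤ ‖z n - q‖

namespace FejerMonotone

variable {z : ℕ → E} {C : Set E} {q : E}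

lemma norm_sub_le (hz : FejerMonotone z C) (hq : q ∈ C) (n : ℕ) : ‖z n - q‖ ≤ ‖z 0 - q‖ :=
  antitone_nat_of_succ_le (f := fun n => ‖z n - q‖) (hz q hq) (Nat.zero_le n)

lemma norm_le (hz : FejerMonotone z C) (hq : q ∈ C) (n : ℕ) : ‖z n‖ ≤ ‖z 0 - q‖ + ‖q‖ :=
  calc ‖z n‖ = ‖(z n - q) + q‖ := by rw [sub_add_cancel]
    _ ≤ ‖z 0 - q‖ + ‖q‖ := (norm_add_le _ _).trans (by linarith [hz.norm_sub_le hq n])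

lemma exists_tendsto_norm_sub (hz : FejerMonotone z C) (hq : q ∈ C) :
    ∃ l, Tendsto (fun n => ‖z n - q‖) atTop (𝓝 l) :=
  ⟨_, tendsto_atTop_ciInf (antitone_nat_of_succ_le (hz q hq)) ⟨0, by rintro _ ⟨n, rfl⟩; positivity⟩⟩

end FejerMonotone

end Fejer

section Weak

variable {E : Type*} [NormedAddCommGroup E] [InnerProductSpace ℝ E] {ι : Type*}

def WeakTendsto (x : ι → E) (l : Filter ι) (y : E) : Prop :=
  ∀ w, Tendsto (fun i => ⟪x i, w⟫) l (𝓝 ⟪y, w⟫)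

lemma WeakTendsto.of_sub_tendsto_zero {x x' : ι → E} {l : Filter ι} {y : E}
    (hx : WeakTendsto x l y) (h : Tendsto (fun i => x i - x' i) l (𝓝 0)) : WeakTendsto x' l y := by
  intro w
  have := (hx w).sub ((h.inner (tendsto_const_nhds (x := w))))
  simpa [← inner_sub_left] using this

lemma exists_weakTendsto_of_norm_le [CompleteSpace E] (U : Ultrafilter ι) {x : ι → E} {M : ℝ}
    (hx : ∀ i, ‖x i‖ ≤ M) : ∃ y, WeakTendsto x U y := by
  have hbound : ∀ w i, |⟪x i, w⟫| ≤ M * ‖w‖ := fun w i =>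
    (abs_real_inner_le_norm _ _).trans (mul_le_mul_of_nonneg_right (hx i) (norm_nonneg w))
  have hlim : ∀ w, ∃ c, Tendsto (fun i => ⟪x i, w⟫) U (𝓝 c) := by
    intro w
    obtain ⟨c, -, hc⟩ := (isCompact_Icc (a := -(M * ‖w‖)) (b := M * ‖w‖)).ultrafilter_le_nhds
      (U.map fun i => ⟪x i, w⟫)
      (by
        rw [Ultrafilter.coe_map, le_principal_iff]
        exact mem_map.2 (univ_mem' fun i => abs_le.mp (hbound w i)))
    exact ⟨c, hc⟩
  choose L hL using hlim
  have hadd : ∀ w w', L (w + w') = L w + L w' := fun w w' =>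
    tendsto_nhds_unique (hL (w + w')) (by simpa only [inner_add_right] using (hL w).add (hL w'))
  have hsmul : ∀ (c : ℝ) w, L (c • w) = c * L w := fun c w =>
    tendsto_nhds_unique (hL (c • w))
      (by simpa only [real_inner_smul_right] using (hL w).const_mul c)
  have hle : ∀ w, ‖L w‖ ≤ M * ‖w‖ := fun w =>
    le_of_tendsto (hL w).norm (Eventually.of_forall fun i => hbound w i)
  set ℓ : StrongDual ℝ E := LinearMap.mkContinuous ⟨⟨L, hadd⟩, hsmul⟩ M hle
  refine ⟨(InnerProductSpace.toDual ℝ E).symm ℓ, fun w => ?_⟩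
  rw [InnerProductSpace.toDual_symm_apply]
  exact hL w

lemma WeakTendsto.eq_of_tendsto_norm_sub {z : ℕ → E} {U V : Filter ℕ} [U.NeBot] [V.NeBot]
    (hU : U ≤ atTop) (hV : V ≤ atTop) {y y' : E} (hy : WeakTendsto z U y)
    (hy' : WeakTendsto z V y') {l l' : ℝ} (hl : Tendsto (fun n => ‖z n - y‖) atTop (𝓝 l))
    (hl' : Tendsto (fun n => ‖z n - y'‖) atTop (𝓝 l')) : y = y' := by
  have hpol : ∀ n, ⟪z n, y - y'⟫ = (‖z n - y'‖ ^ 2 - ‖z n - y‖ ^ 2 - ‖y'‖ ^ 2 + ‖y‖ ^ 2) / 2 := by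
    intro n
    rw [norm_sub_sq_real, norm_sub_sq_real, inner_sub_right]
    ring
  have hc : Tendsto (fun n => ⟪z n, y - y'⟫) atTop
      (𝓝 ((l' ^ 2 - l ^ 2 - ‖y'‖ ^ 2 + ‖y‖ ^ 2) / 2)) := by
    simp only [hpol]
    exact ((((hl'.pow 2).sub (hl.pow 2)).sub_const _).add_const _).div_const 2
  have e := tendsto_nhds_unique (hy (y - y')) (hc.mono_left hU)
  have e' := tendsto_nhds_unique (hy' (y - y')) (hc.mono_left hV)
  rw [← sub_eq_zero, ← inner_self_eq_zero (𝕜 := ℝ), inner_sub_left, e, e', sub_self]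

namespace FejerMonotone

variable {z : ℕ → E} {C : Set E}

lemma exists_weakTendsto [CompleteSpace E] (hz : FejerMonotone z C) (hC : C.Nonempty)
    (hclust : ∀ (U : Ultrafilter ℕ) (y : E), (U : Filter ℕ) ≤ atTop → WeakTendsto z U y → y ∈ C) :
    ∃ y ∈ C, WeakTendsto z atTop y := by
  obtain ⟨q, hq⟩ := hC
  have hlim : ∀ U : Ultrafilter ℕ, (U : Filter ℕ) ≤ atTop → ∃ y ∈ C, WeakTendsto z U y :=
    fun U hU =>
    let ⟨y, hy⟩ := exists_weakTendsto_of_norm_le U (hz.norm_le hq)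
    ⟨y, hclust U y hU hy, hy⟩
  obtain ⟨y, hyC, hy⟩ := hlim (Ultrafilter.of atTop) (Ultrafilter.of_le _)
  refine ⟨y, hyC, fun w => (tendsto_iff_ultrafilter _ _ _).2 fun U hU => ?_⟩
  obtain ⟨y', hy'C, hy'⟩ := hlim U hU
  obtain ⟨l, hl⟩ := hz.exists_tendsto_norm_sub hy'C
  obtain ⟨l', hl'⟩ := hz.exists_tendsto_norm_sub hyC
  rw [← hy'.eq_of_tendsto_norm_sub hU (Ultrafilter.of_le _) hy hl hl']
  exact hy' w

end FejerMonotone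

lemma MaxMonotone.mem_of_weakTendsto {A : E → Set E} (hA : MaxMonotone A) {l : Filter ι}
    [l.NeBot] {x v : ι → E} {y u : E} {M : ℝ} (hxM : ∀ i, ‖x i‖ ≤ M) (hx : WeakTendsto x l y)
    (hv : Tendsto v l (𝓝 u)) (hmem : ∀ i, v i ∈ A (x i)) : u ∈ A y := by
  refine hA.2 y u fun y' v' hv' => ?_
  have h1 : Tendsto (fun i => ⟪x i - y', v i - u⟫) l (𝓝 0) := by
    refine squeeze_zero_norm (a := fun i => (M + ‖y'‖) * ‖v i - u‖)
      (fun i => (norm_inner_le_norm _ _).trans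
      (mul_le_mul_of_nonneg_right ((norm_sub_le _ _).trans (by linarith [hxM i]))
        (norm_nonneg _))) ?_
    simpa using (tendsto_iff_norm_sub_tendsto_zero.1 hv).const_mul (M + ‖y'‖)
  have h2 := (hx (u - v')).sub_const ⟪y', u - v'⟫
  have hlim : Tendsto (fun i => ⟪x i - y', v i - v'⟫) l (𝓝 ⟪y - y', u - v'⟫) := by
    convert h1.add h2 using 1
    · ext i
      simp only [inner_sub_left, inner_sub_right]
      ring
    · simp only [inner_sub_left, zero_add]
  exact ge_of_tendsto hlim (Eventually.of_forall fun i => hA.1 (hmem i) hv')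

end Weak

lemma tendsto_zero_of_add_le {a b : ℕ → ℝ} (ha : ∀ n, 0 ≤ a n) (hb : ∀ n, 0 ≤ b n)
    (h : ∀ n, a (n + 1) + b n ≤ a n) : Tendsto b atTop (𝓝 0) := by
  have hanti : Antitone a := antitone_nat_of_succ_le fun n => by linarith [h n, hb n]
  have hlim := tendsto_atTop_ciInf hanti ⟨0, by rintro _ ⟨n, rfl⟩; exact ha n⟩
  refine squeeze_zero hb (fun n => le_sub_iff_add_le'.mpr (h n)) ?_
  simpa using hlim.sub (hlim.comp (tendsto_add_atTop_nat 1))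

section Tseng

variable {E : Type*} [NormedAddCommGroup E] [InnerProductSpace ℝ E]
  {A : E → Set E} {B : E → E} {K : ℝ≥0} {δ : ℝ} {z r s t : E}

lemma tseng_exists_smul_eq (hs : r - s ∈ δ • A s) (ht : t = s - δ • B s) :
    ∃ v ∈ A s + {B s}, δ • v = r - t := by
  obtain ⟨u, hu, hδu⟩ := Set.mem_smul_set.mp hs
  refine ⟨u + B s, Set.add_mem_add hu rfl, ?_⟩
  rw [smul_add, hδu, ht]
  abel

lemma tseng_sub_eq (hr : r = z - δ • B z) (ht : t = s - δ • B s) :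
    r - t = (z - s) - δ • (B z - B s) := by
  rw [hr, ht]
  module

lemma tseng_norm_sub_le (hB : LipschitzWith K B) (hδ : 0 ≤ δ) (hr : r = z - δ • B z)
    (ht : t = s - δ • B s) : ‖t - r‖ ≤ (1 + δ * K) * ‖z - s‖ := by
  rw [← norm_neg, neg_sub, tseng_sub_eq hr ht]
  refine (norm_sub_le _ _).trans ?_
  rw [norm_smul, Real.norm_of_nonneg hδ]
  nlinarith [hB.norm_sub_le z s]

lemma tseng_norm_sub_sq_le (hA : MonotoneSV A) (hBmono : ∀ x y, 0 ≤ ⟪x - y, B x - B y⟫)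
    (hB : LipschitzWith K B) (hδ : 0 ≤ δ) {q : E} (hq : (0 : E) ∈ A q + {B q})
    (hr : r = z - δ • B z) (hs : r - s ∈ δ • A s) (ht : t = s - δ • B s) :
    ‖z + (t - r) - q‖ ^ 2 + (1 - (δ * K) ^ 2) * ‖z - s‖ ^ 2 ≤ ‖z - q‖ ^ 2 := by
  obtain ⟨v, hv, hδv⟩ := tseng_exists_smul_eq hs ht
  have hpos : 0 ≤ ⟪s - q, r - t⟫ := by
    rw [← hδv, real_inner_smul_right]
    exact mul_nonneg hδ (by simpa using (hA.add_singleton hBmono) hv hq)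
  have hlip : ‖(z - s) - (r - t)‖ ≤ δ * K * ‖z - s‖ := by
    rw [tseng_sub_eq hr ht, sub_sub_cancel, norm_smul, Real.norm_of_nonneg hδ, mul_assoc]
    exact mul_le_mul_of_nonneg_left (hB.norm_sub_le z s) hδ
  have hexp : ‖z + (t - r) - q‖ ^ 2 =
      ‖z - q‖ ^ 2 - 2 * ⟪s - q, r - t⟫ + ‖(z - s) - (r - t)‖ ^ 2 - ‖z - s‖ ^ 2 := by
    have hsplit : ⟪z - q, r - t⟫ = ⟪z - s, r - t⟫ + ⟪s - q, r - t⟫ := by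
      rw [← inner_add_left, sub_add_sub_cancel]
    rw [show z + (t - r) - q = (z - q) - (r - t) by abel, norm_sub_sq_real (z - q),
      norm_sub_sq_real (z - s), hsplit]
    ring
  nlinarith [pow_le_pow_left₀ (norm_nonneg _) hlip 2]

lemma tseng_relaxed_norm_sub_sq_le (hA : MonotoneSV A)
    (hBmono : ∀ x y, 0 ≤ ⟪x - y, B x - B y⟫) (hB : LipschitzWith K B) (hδ : 0 ≤ δ) {q : E}
    (hq : (0 : E) ∈ A q + {B q}) {lam : ℝ} (hlam0 : 0 ≤ lam) (hlam1 : lam ≤ 1) {z' : E}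
    (hr : r = z - δ • B z) (hs : r - s ∈ δ • A s) (ht : t = s - δ • B s)
    (hz' : z' = z + lam • (t - r)) :
    ‖z' - q‖ ^ 2 + lam * (1 - (δ * K) ^ 2) * ‖z - s‖ ^ 2 ≤ ‖z - q‖ ^ 2 := by
  have hconv := (convexOn_univ_norm.pow (fun _ _ => norm_nonneg _) 2).2 (Set.mem_univ (z - q))
    (Set.mem_univ (z + (t - r) - q)) (sub_nonneg.2 hlam1) hlam0 (by ring)
  simp only [Pi.pow_apply, smul_eq_mul] at hconv
  rw [show (1 - lam) • (z - q) + lam • (z + (t - r) - q) = z' - q by rw [hz']; module] at hconv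
  have hstep := tseng_norm_sub_sq_le hA hBmono hB hδ hq hr hs ht
  nlinarith [mul_le_mul_of_nonneg_left hstep hlam0]

end Tseng

section TsengIteration

variable {E : Type*} [NormedAddCommGroup E] [InnerProductSpace ℝ E]

structure IsTsengIteration (A : E → Set E) (B : E → E) (δ lam : ℕ → ℝ) (z r s t : ℕ → E) :
    Prop where
  r_eq : ∀ n, r n = z n - δ n • B (z n)
  sub_mem : ∀ n, r n - s n ∈ δ n • A (s n)
  t_eq : ∀ n, t n = s n - δ n • B (s n)
  succ_eq : ∀ n, z (n + 1) = z n + lam n • (t n - r n)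

namespace IsTsengIteration

variable {A : E → Set E} {B : E → E} {K : ℝ≥0} {δ lam : ℕ → ℝ} {z r s t : ℕ → E}

lemma norm_sub_sq_le (h : IsTsengIteration A B δ lam z r s t) (hA : MonotoneSV A)
    (hBmono : ∀ x y, 0 ≤ ⟪x - y, B x - B y⟫) (hB : LipschitzWith K B) (hδ : ∀ n, 0 ≤ δ n)
    (hlam : ∀ n, lam n ∈ Set.Icc 0 1) {q : E} (hq : (0 : E) ∈ A q + {B q}) (n : ℕ) :
    ‖z (n + 1) - q‖ ^ 2 + lam n * (1 - (δ n * K) ^ 2) * ‖z n - s n‖ ^ 2 ≤ ‖z n - q‖ ^ 2 :=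
  tseng_relaxed_norm_sub_sq_le hA hBmono hB (hδ n) hq (hlam n).1 (hlam n).2 (h.r_eq n)
    (h.sub_mem n) (h.t_eq n) (h.succ_eq n)

lemma fejerMonotone (h : IsTsengIteration A B δ lam z r s t) (hA : MonotoneSV A)
    (hBmono : ∀ x y, 0 ≤ ⟪x - y, B x - B y⟫) (hB : LipschitzWith K B) (hδ : ∀ n, 0 ≤ δ n)
    (hlam : ∀ n, lam n ∈ Set.Icc 0 1) (hgap : ∀ n, 0 ≤ lam n * (1 - (δ n * K) ^ 2)) :
    FejerMonotone z {q | (0 : E) ∈ A q + {B q}} := fun q hq n => by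
  have hstep := h.norm_sub_sq_le hA hBmono hB hδ hlam hq n
  have := mul_nonneg (hgap n) (sq_nonneg ‖z n - s n‖)
  exact (pow_le_pow_iff_left₀ (norm_nonneg _) (norm_nonneg _) two_ne_zero).mp (by linarith)

lemma tendsto_norm_sub_zero (h : IsTsengIteration A B δ lam z r s t) (hA : MonotoneSV A)
    (hBmono : ∀ x y, 0 ≤ ⟪x - y, B x - B y⟫) (hB : LipschitzWith K B) (hδ : ∀ n, 0 ≤ δ n)
    (hlam : ∀ n, lam n ∈ Set.Icc 0 1) {c : ℝ} (hc : 0 < c)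
    (hgap : ∀ n, c ≤ lam n * (1 - (δ n * K) ^ 2)) {q : E} (hq : (0 : E) ∈ A q + {B q}) :
    Tendsto (fun n => ‖z n - s n‖) atTop (𝓝 0) := by
  have hsq : Tendsto (fun n => c * ‖z n - s n‖ ^ 2) atTop (𝓝 0) :=
    tendsto_zero_of_add_le (a := fun n => ‖z n - q‖ ^ 2) (fun n => sq_nonneg _)
      (fun n => by positivity) fun n =>
        (h.norm_sub_sq_le hA hBmono hB hδ hlam hq n).trans' (by gcongr; exact hgap n)
  simpa [Real.sqrt_sq (norm_nonneg _), hc.ne'] using (hsq.div_const c).sqrt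

lemma norm_t_sub_r_le (h : IsTsengIteration A B δ lam z r s t) (hB : LipschitzWith K B)
    (hδ : ∀ n, 0 ≤ δ n) (hδK : ∀ n, δ n * K ≤ 1) (n : ℕ) : ‖t n - r n‖ ≤ 2 * ‖z n - s n‖ :=
  (tseng_norm_sub_le hB (hδ n) (h.r_eq n) (h.t_eq n)).trans
    (mul_le_mul_of_nonneg_right (by linarith [hδK n]) (norm_nonneg _))

lemma tendsto_succ_sub (h : IsTsengIteration A B δ lam z r s t) (hB : LipschitzWith K B)
    (hδ : ∀ n, 0 ≤ δ n) (hδK : ∀ n, δ n * K ≤ 1) (hlam : ∀ n, lam n ∈ Set.Icc 0 1)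
    (hres : Tendsto (fun n => ‖z n - s n‖) atTop (𝓝 0)) :
    Tendsto (fun n => z (n + 1) - z n) atTop (𝓝 0) := by
  refine squeeze_zero_norm (fun n => ?_) (by simpa using hres.const_mul 2)
  rw [h.succ_eq n, add_sub_cancel_left, norm_smul, Real.norm_of_nonneg (hlam n).1]
  exact (mul_le_of_le_one_left (norm_nonneg _) (hlam n).2).trans (h.norm_t_sub_r_le hB hδ hδK n)

lemma mem_of_weakTendsto [CompleteSpace E] (h : IsTsengIteration A B δ lam z r s t)
    (hA : MaxMonotone A) (hBmono : ∀ x y, 0 ≤ ⟪x - y, B x - B y⟫) (hB : LipschitzWith K B)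
    {ε : ℝ} (hε : 0 < ε) (hδ : ∀ n, ε ≤ δ n) (hδK : ∀ n, δ n * K ≤ 1)
    (hres : Tendsto (fun n => ‖z n - s n‖) atTop (𝓝 0)) {M : ℝ} (hM : ∀ n, ‖z n‖ ≤ M)
    {U : Filter ℕ} [U.NeBot] (hU : U ≤ atTop) {y : E} (hy : WeakTendsto z U y) :
    (0 : E) ∈ A y + {B y} := by
  have hδ0 : ∀ n, 0 ≤ δ n := fun n => hε.le.trans (hδ n)
  choose v hv hδv using fun n => tseng_exists_smul_eq (h.sub_mem n) (h.t_eq n)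
  have hv0 : Tendsto v atTop (𝓝 0) := by
    refine squeeze_zero_norm (a := fun n => 2 / ε * ‖z n - s n‖) (fun n => ?_)
      (by simpa using hres.const_mul (2 / ε))
    have hδnorm : δ n * ‖v n‖ ≤ 2 * ‖z n - s n‖ := by
      rw [← Real.norm_of_nonneg (hδ0 n), ← norm_smul, hδv n, norm_sub_rev]
      exact h.norm_t_sub_r_le hB hδ0 hδK n
    rw [div_mul_eq_mul_div, le_div_iff₀' hε]
    nlinarith [mul_le_mul_of_nonneg_right (hδ n) (norm_nonneg (v n))]
  obtain ⟨R, hR⟩ := hres.bddAbove_range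
  have hsM : ∀ n, ‖s n‖ ≤ M + R := fun n =>
    calc ‖s n‖ = ‖z n - (z n - s n)‖ := by rw [sub_sub_cancel]
      _ ≤ M + R := (norm_sub_le _ _).trans (add_le_add (hM n) (hR ⟨n, rfl⟩))
  exact (hA.add_singleton hBmono hB).mem_of_weakTendsto hsM
    (hy.of_sub_tendsto_zero ((tendsto_zero_iff_norm_tendsto_zero.2 hres).mono_left hU))
    (hv0.mono_left hU) hv

end IsTsengIteration

end TsengIteration

lemma tseng_stepsize_bounds {η ε δ : ℝ} (hη : 0 < η) (hε : 0 ≤ ε)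
    (hδ : δ ∈ Set.Icc ε (1 / η - ε)) :
    δ * η ≤ 1 ∧ ε * η ≤ 1 - (δ * η) ^ 2 := by
  have hδη : δ * η ≤ 1 - ε * η := by
    have := mul_le_mul_of_nonneg_right hδ.2 hη.le
    rwa [sub_mul, one_div_mul_cancel hη.ne'] at this
  have hεδ := mul_le_mul_of_nonneg_right hδ.1 hη.le
  have hεη : 0 ≤ ε * η := mul_nonneg hε hη.le
  constructor <;> nlinarith

theorem stmt2 (𝒜 : H → Set H) (ℬ : H → H) (η : ℝ) (hη : 0 < η)
    (h𝒜 : MaxMonotone 𝒜)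
    (hℬmono : ∀ x y : H, 0 ≤ ⟪x - y, ℬ x - ℬ y⟫)
    (hℬlip : ∀ x y : H, ‖ℬ x - ℬ y‖ ≤ η * ‖x - y‖)
    (hzer : ∃ x : H, (0 : H) ∈ 𝒜 x + {ℬ x})
    (ε : ℝ) (hε : ε ∈ Set.Ioo 0 (max 1 (1 / (2 * η))))
    (δ lam : ℕ → ℝ)
    (hδ : ∀ n, δ n ∈ Set.Icc ε (1 / η - ε))
    (hlam : ∀ n, lam n ∈ Set.Icc ε 1)
    (z r s t : ℕ → H)
    (hr : ∀ n, r n = z n - δ n • ℬ (z n))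
    (hs : ∀ n, r n - s n ∈ δ n • 𝒜 (s n))  -- `s n = J_{δₙ 𝒜} (r n)`
    (ht : ∀ n, t n = s n - δ n • ℬ (s n))
    (hz : ∀ n, z (n + 1) = z n + lam n • (t n - r n)) :
    ∃ zbar : H, (0 : H) ∈ 𝒜 zbar + {ℬ zbar} ∧
      (∀ w : H, Tendsto (fun n => ⟪z n, w⟫) atTop (𝓝 ⟪zbar, w⟫)) ∧
      Tendsto (fun n => z (n + 1) - z n) atTop (𝓝 0) := by
  have hK : (η.toNNReal : ℝ) = η := Real.coe_toNNReal _ hη.le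
  have hℬ : LipschitzWith η.toNNReal ℬ :=
    LipschitzWith.of_dist_le_mul fun x y => by simpa only [dist_eq_norm, hK] using hℬlip x y
  have hit : IsTsengIteration 𝒜 ℬ δ lam z r s t := ⟨hr, hs, ht, hz⟩
  have hε0 : 0 < ε := hε.1
  have hδ0 : ∀ n, 0 ≤ δ n := fun n => hε0.le.trans (hδ n).1
  have hlam' : ∀ n, lam n ∈ Set.Icc 0 1 := fun n => ⟨hε0.le.trans (hlam n).1, (hlam n).2⟩
  have hδK : ∀ n, δ n * η.toNNReal ≤ 1 := fun n => by
    rw [hK]; exact (tseng_stepsize_bounds hη hε0.le (hδ n)).1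
  have hgap : ∀ n, ε * (ε * η) ≤ lam n * (1 - (δ n * η.toNNReal) ^ 2) := fun n => by
    rw [hK]
    exact mul_le_mul (hlam n).1 (tseng_stepsize_bounds hη hε0.le (hδ n)).2 (by positivity)
      (hlam' n).1
  obtain ⟨q, hq⟩ := hzer
  have hfejer := hit.fejerMonotone h𝒜.1 hℬmono hℬ hδ0 hlam' fun n =>
    (by positivity : (0 : ℝ) ≤ ε * (ε * η)).trans (hgap n)
  have hres := hit.tendsto_norm_sub_zero h𝒜.1 hℬmono hℬ hδ0 hlam' (by positivity) hgap hq
  obtain ⟨zbar, hzbar, hweak⟩ := hfejer.exists_weakTendsto ⟨q, hq⟩ fun U y hU hy =>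
    hit.mem_of_weakTendsto h𝒜 hℬmono hℬ hε0 (fun n => (hδ n).1) hδK hres (hfejer.norm_le hq) hU hy
  exact ⟨zbar, hzbar, hweak, hit.tendsto_succ_sub hℬ hδ0 hδK hlam' hres⟩
end
end

section
/- Let H be a real Hilbert space, let V be a closed vector subspace of H with orthogonal projection P_V, let A : H → 2^H be maximally monotone, let γ > 0, and set 𝒜_γ = (γA)_V. Then for every x ∈ H, J_{𝒜_γ} x = 2 P_V J_{γA} x − J_{γA} x + x − P_V x = (x + R_{N_V} R_{γA} x)/2, where R_{γA} = 2 J_{γA} − Id and R_{N_V} = 2 J_{N_V} − Id are the reflection operators of γA and of the normal cone N_V (so that J_{N_V} = P_V). -/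
/-!
Statement 5: For `𝒜_γ = (γA)_V` one has
`J_{𝒜_γ} x = 2 P_V J_{γA} x − J_{γA} x + x − P_V x = (x + R_{N_V} R_{γA} x)/2`,
where `R_{γA} = 2J_{γA} − Id` and `R_{N_V} = 2P_V − Id`.
The resolvent `J_{γA}` is encoded as a map `JγA` satisfying the characterizing
property `x - JγA x ∈ γ • A (JγA x)`, and the claim `u = J_{𝒜_γ} x` is expressed
through the characterization `x - u ∈ 𝒜_γ u`.
-/

open scoped Pointwise RealInnerProductSpace

noncomputable section

variable {H : Type*} [NormedAddCommGroup H] [InnerProductSpace ℝ H] [CompleteSpace H]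

/-!
The partial inverse `B_V` is obtained from `B` by exchanging the `Vᗮ`-components of points and
values: `P_V y + P_{Vᗮ} p ∈ B_V (P_V p + P_{Vᗮ} y)` iff `y ∈ B p`. Splitting `x = p + y` with
`p = J_{γA} x` and `y = x - p ∈ γA p`, the point `u = P_V p + P_{Vᗮ} y` therefore satisfies
`x - u = P_V y + P_{Vᗮ} p ∈ (γA)_V u`, i.e. `u = J_{(γA)_V} x`. Both displayed formulas for `u`
are rearrangements of `P_V p + P_{Vᗮ} y` using `P_{Vᗮ} = Id - P_V`.
-/

open Submodule

section PartialInverse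

variable {E : Type*} [NormedAddCommGroup E] [InnerProductSpace ℝ E]
  {V : Submodule ℝ E} [V.HasOrthogonalProjection]

theorem starProjection_starProjection (a : E) :
    V.starProjection (V.starProjection a) = V.starProjection a :=
  starProjection_eq_self_iff.mpr (starProjection_apply_mem V a)

theorem starProjection_add_starProjection_orthogonal_left (a b : E) :
    V.starProjection (V.starProjection a + Vᗮ.starProjection b) = V.starProjection a := by
  simp [starProjection_orthogonal_val, starProjection_starProjection]

theorem starProjection_add_starProjection_orthogonal_right (a b : E) :
    Vᗮ.starProjection (V.starProjection a + Vᗮ.starProjection b) = Vᗮ.starProjection b := by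
  simp [starProjection_orthogonal_val, starProjection_starProjection]

theorem mem_partialInv_iff (B : E → Set E) (p y : E) :
    V.starProjection y + Vᗮ.starProjection p ∈
        partialInv V B (V.starProjection p + Vᗮ.starProjection y) ↔ y ∈ B p := by
  simp only [partialInv, ← starProjection_apply, Set.mem_ofPred_eq,
    starProjection_add_starProjection_orthogonal_left,
    starProjection_add_starProjection_orthogonal_right,
    starProjection_add_starProjection_orthogonal]

theorem two_smul_starProjection_sub_add_sub_starProjection (p x : E) :
    (2 : ℝ) • V.starProjection p - p + x - V.starProjection x =
      V.starProjection p + Vᗮ.starProjection (x - p) := by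
  rw [starProjection_orthogonal_val, map_sub]
  module

theorem sub_starProjection_add_starProjection_orthogonal_sub (p x : E) :
    x - (V.starProjection p + Vᗮ.starProjection (x - p)) =
      V.starProjection (x - p) + Vᗮ.starProjection p := by
  rw [starProjection_orthogonal_val, starProjection_orthogonal_val, map_sub]
  module

theorem two_smul_starProjection_sub_add_sub_starProjection_eq_half_add_reflection (p x : E) :
    (2 : ℝ) • V.starProjection p - p + x - V.starProjection x =
      (2 : ℝ)⁻¹ • (x + ((2 : ℝ) • V.starProjection ((2 : ℝ) • p - x) - ((2 : ℝ) • p - x))) := by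
  rw [map_sub, map_smul]
  module

end PartialInverse

theorem stmt5_general (V : Submodule ℝ H) [CompleteSpace V] (A : H → Set H) (γ : ℝ)
    (JγA : H → H) (hJ : ∀ w : H, w - JγA w ∈ γ • A (JγA w)) :
    ∀ x : H,
      -- `J_{𝒜_γ} x = 2 P_V J_{γA} x − J_{γA} x + x − P_V x` (resolvent characterization):
      (x - ((2 : ℝ) • (Submodule.orthogonalProjectionOnto V (JγA x) : H) - JγA x + x
            - (Submodule.orthogonalProjectionOnto V x : H))
        ∈ partialInv V (fun w => γ • A w)
            ((2 : ℝ) • (Submodule.orthogonalProjectionOnto V (JγA x) : H) - JγA x + x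
              - (Submodule.orthogonalProjectionOnto V x : H))) ∧
      -- and this point equals `(x + R_{N_V} R_{γA} x)/2` where `R_{γA} = 2J_{γA} − Id`,
      -- `R_{N_V} = 2J_{N_V} − Id = 2P_V − Id`:
      ((2 : ℝ) • (Submodule.orthogonalProjectionOnto V (JγA x) : H) - JγA x + x
          - (Submodule.orthogonalProjectionOnto V x : H)
        = (2 : ℝ)⁻¹ •
            (x + ((2 : ℝ) • (Submodule.orthogonalProjectionOnto V ((2 : ℝ) • JγA x - x) : H)
                    - ((2 : ℝ) • JγA x - x)))) := by
  intro x
  simp only [← starProjection_apply]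
  refine ⟨?_, two_smul_starProjection_sub_add_sub_starProjection_eq_half_add_reflection _ _⟩
  rw [two_smul_starProjection_sub_add_sub_starProjection,
    sub_starProjection_add_starProjection_orthogonal_sub, mem_partialInv_iff]
  exact hJ x

theorem stmt5 (V : Submodule ℝ H) [CompleteSpace V] (A : H → Set H) (γ : ℝ) (hγ : 0 < γ)
    (hA : MaxMonotone A)
    (JγA : H → H) (hJ : ∀ w : H, w - JγA w ∈ γ • A (JγA w)) :
    ∀ x : H,
      -- `J_{𝒜_γ} x = 2 P_V J_{γA} x − J_{γA} x + x − P_V x` (resolvent characterization):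
      (x - ((2 : ℝ) • (Submodule.orthogonalProjectionOnto V (JγA x) : H) - JγA x + x
            - (Submodule.orthogonalProjectionOnto V x : H))
        ∈ partialInv V (fun w => γ • A w)
            ((2 : ℝ) • (Submodule.orthogonalProjectionOnto V (JγA x) : H) - JγA x + x
              - (Submodule.orthogonalProjectionOnto V x : H))) ∧
      -- and this point equals `(x + R_{N_V} R_{γA} x)/2` where `R_{γA} = 2J_{γA} − Id`,
      -- `R_{N_V} = 2J_{N_V} − Id = 2P_V − Id`:
      ((2 : ℝ) • (Submodule.orthogonalProjectionOnto V (JγA x) : H) - JγA x + x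
          - (Submodule.orthogonalProjectionOnto V x : H)
        = (2 : ℝ)⁻¹ •
            (x + ((2 : ℝ) • (Submodule.orthogonalProjectionOnto V ((2 : ℝ) • JγA x - x) : H)
                    - ((2 : ℝ) • JγA x - x)))) :=
  stmt5_general V A γ JγA hJ
end
end

section
/- Let H be a real Hilbert space, let V be a closed vector subspace of H with orthogonal projection P_V and orthogonal complement V⊥, let A : H → 2^H be maximally monotone, let B : H → H be monotone and χ-Lipschitzian, let γ > 0, and set 𝒜_γ = (γA)_V and ℬ_γ = γ P_V ∘ B ∘ P_V. Then, for every x ∈ H, one has 0 ∈ Ax + Bx + N_V x if and only if x ∈ V and there exists y ∈ V⊥ ∩ (Ax + Bx) such that x + γ(y − P_{V⊥} Bx) ∈ zer(𝒜_γ + ℬ_γ). -/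
/-!
For `x ∈ V` and `y ∈ V⊥`, the point `z = x + γ(y − P_{V⊥}Bx)` has `P_V z = x` and
`P_{V⊥} z = γ(y − P_{V⊥}Bx)`. Hence `0 ∈ 𝒜_γ z + ℬ_γ z` means `−γ P_V Bx ∈ (γA)_V z`, which unfolds
to `γ(y − Bx) ∈ γ Ax`, i.e. `y ∈ Ax + Bx`. So the zero condition is implied by the other two, and
`0 ∈ Ax + Bx + N_V x` says exactly that `x ∈ V` and some `y ∈ V⊥` lies in `Ax + Bx`.
-/

open scoped Pointwise RealInnerProductSpace

noncomputable section

variable {H : Type*} [NormedAddCommGroup H] [InnerProductSpace ℝ H] [CompleteSpace H]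

theorem Set.mem_add_singleton_iff {G : Type*} [AddGroup G] {S : Set G} {y b : G} :
    y ∈ S + {b} ↔ y - b ∈ S := by
  rw [Set.add_singleton, Set.image_add_right, Set.mem_preimage, sub_eq_add_neg]

section ClosedSubspace

open Submodule

variable {E : Type*} [NormedAddCommGroup E] [InnerProductSpace ℝ E] {V : Submodule ℝ E}

theorem zero_mem_add_normalConeSub_iff {S : Set E} {x : E} :
    0 ∈ S + normalConeSub V x ↔ x ∈ V ∧ ∃ y ∈ Vᗮ, y ∈ S := by
  constructor
  · rintro ⟨s, hs, n, ⟨hx, hn⟩, hsn⟩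
    refine ⟨hx, s, ?_, hs⟩
    rw [eq_neg_of_add_eq_zero_left hsn]
    exact neg_mem hn
  · rintro ⟨hx, y, hy, hyS⟩
    exact ⟨y, hyS, -y, ⟨hx, neg_mem hy⟩, add_neg_cancel y⟩

variable [V.HasOrthogonalProjection] {x w : E}

theorem starProjection_add_of_mem_orthogonal (hx : x ∈ V) (hw : w ∈ Vᗮ) :
    V.starProjection (x + w) = x := by
  rw [map_add, starProjection_eq_self_iff.2 hx, (starProjection_apply_eq_zero_iff _).2 hw, add_zero]

theorem starProjection_orthogonal_add_of_mem (hx : x ∈ V) (hw : w ∈ Vᗮ) :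
    Vᗮ.starProjection (x + w) = w := by
  rw [add_comm]
  exact starProjection_add_of_mem_orthogonal hw (V.le_orthogonal_orthogonal hx)

theorem mem_partialInv_add_iff {A : E → Set E} {u : E} (hx : x ∈ V) (hw : w ∈ Vᗮ) (hu : u ∈ V) :
    u ∈ partialInv V A (x + w) ↔ u + w ∈ A x := by
  simp only [partialInv, Set.mem_ofPred_eq, coe_orthogonalProjectionOnto_apply,
    starProjection_add_of_mem_orthogonal hx hw, starProjection_orthogonal_add_of_mem hx hw,
    starProjection_eq_self_iff.2 hu, starProjection_orthogonal_apply_eq_zero hu, add_zero]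

theorem zero_mem_partialInv_smul_add_singleton_iff {A : E → Set E} {B : E → E} {y : E} {γ : ℝ}
    (hx : x ∈ V) (hy : y ∈ Vᗮ) (hγ : γ ≠ 0) :
    (0 : E) ∈ partialInv V (fun w => γ • A w) (x + γ • (y - Vᗮ.starProjection (B x))) +
        {γ • V.starProjection (B (V.starProjection (x + γ • (y - Vᗮ.starProjection (B x)))))} ↔
      y - B x ∈ A x := by
  have hw : γ • (y - Vᗮ.starProjection (B x)) ∈ Vᗮ :=
    Vᗮ.smul_mem γ (Vᗮ.sub_mem hy (Vᗮ.starProjection_apply_mem _))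
  have hu : -(γ • V.starProjection (B x)) ∈ V :=
    V.neg_mem (V.smul_mem γ (V.starProjection_apply_mem _))
  have hsum : -(γ • V.starProjection (B x)) + γ • (y - Vᗮ.starProjection (B x)) = γ • (y - B x) := by
    linear_combination (norm := module) (-γ) • V.starProjection_add_starProjection_orthogonal (B x)
  rw [starProjection_add_of_mem_orthogonal hx hw, Set.mem_add_singleton_iff, zero_sub,
    mem_partialInv_add_iff hx hw hu, hsum, Set.smul_mem_smul_set_iff₀ hγ]

end ClosedSubspace

theorem stmt7_general (V : Submodule ℝ H) [CompleteSpace V] (A : H → Set H) (B : H → H)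
    (γ : ℝ) (hγ : 0 < γ) :
    ∀ x : H,
      ((0 : H) ∈ A x + {B x} + normalConeSub V x) ↔
      (x ∈ V ∧ ∃ y : H, y ∈ Vᗮ ∧ y ∈ A x + {B x} ∧
        (0 : H) ∈ partialInv V (fun w => γ • A w)
              (x + γ • (y - (Submodule.orthogonalProjectionOnto Vᗮ (B x) : H)))
            + {γ • (Submodule.orthogonalProjectionOnto V
                (B (Submodule.orthogonalProjectionOnto V
                  (x + γ • (y - (Submodule.orthogonalProjectionOnto Vᗮ (B x) : H))) : H)) : H)}) := by
  intro x
  simp only [Submodule.coe_orthogonalProjectionOnto_apply]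
  rw [zero_mem_add_normalConeSub_iff]
  refine and_congr_right fun hx => exists_congr fun y => and_congr_right fun hy => ?_
  rw [zero_mem_partialInv_smul_add_singleton_iff hx hy hγ.ne', Set.mem_add_singleton_iff, and_self]

theorem stmt7 (V : Submodule ℝ H) [CompleteSpace V] (A : H → Set H) (B : H → H)
    (χ : ℝ) (hA : MaxMonotone A)
    (hBmono : ∀ x y : H, 0 ≤ ⟪x - y, B x - B y⟫)
    (hBlip : ∀ x y : H, ‖B x - B y‖ ≤ χ * ‖x - y‖)
    (γ : ℝ) (hγ : 0 < γ) :
    ∀ x : H,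
      ((0 : H) ∈ A x + {B x} + normalConeSub V x) ↔
      (x ∈ V ∧ ∃ y : H, y ∈ Vᗮ ∧ y ∈ A x + {B x} ∧
        (0 : H) ∈ partialInv V (fun w => γ • A w)
              (x + γ • (y - (Submodule.orthogonalProjectionOnto Vᗮ (B x) : H)))
            + {γ • (Submodule.orthogonalProjectionOnto V
                (B (Submodule.orthogonalProjectionOnto V
                  (x + γ • (y - (Submodule.orthogonalProjectionOnto Vᗮ (B x) : H))) : H)) : H)}) :=
  stmt7_general V A B γ hγ
end
end

section
/- Let 𝖧 and 𝖦₁,…,𝖦_m be real Hilbert spaces, for each i let 𝖵ᵢ be a closed vector subspace of 𝖦ᵢ with orthogonal projection P_{𝖵ᵢ}, and let 𝖫ᵢ : 𝖧 → 𝖦ᵢ be a bounded linear operator. Define on the Hilbert direct sum H = 𝖧 ⊕ 𝖦₁ ⊕ ⋯ ⊕ 𝖦_m the operator L : H → H : (x, u₁,…,u_m) ↦ (Σᵢ₌₁^m 𝖫ᵢ* P_{𝖵ᵢ} uᵢ, −P_{𝖵₁}𝖫₁x, …, −P_{𝖵_m}𝖫_m x). Then L is a bounded linear operator, L* = −L,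 and ‖L‖ ≤ √(Σᵢ₌₁^m ‖𝖫ᵢ‖²). -/
/-!
The operator is the block operator `[[0, T*], [-T, 0]]` on `𝖧 ⊕ (𝖦₁ ⊕ ⋯ ⊕ 𝖦_m)` built from
`T x = (P_{𝖵ᵢ} 𝖫ᵢ x)ᵢ`, whose adjoint is `u ↦ Σᵢ 𝖫ᵢ* P_{𝖵ᵢ} uᵢ` because projections are
self-adjoint. Every such block operator is skew-adjoint, and has norm at most `‖T‖` since
`‖(T* u, -T x)‖² ≤ ‖T‖² (‖u‖² + ‖x‖²)`; finally `‖T‖² ≤ Σᵢ ‖P_{𝖵ᵢ} 𝖫ᵢ‖² ≤ Σᵢ ‖𝖫ᵢ‖²`.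
-/

set_option synthInstance.maxHeartbeats 1000000

noncomputable section

variable {m : ℕ} {E : Type*} [NormedAddCommGroup E] [InnerProductSpace ℝ E]
  [CompleteSpace E]
  {G : Fin m → Type*} [∀ i, NormedAddCommGroup (G i)] [∀ i, InnerProductSpace ℝ (G i)]
  [∀ i, CompleteSpace (G i)]

instance : CompleteSpace (PiLp 2 G) := inferInstance

namespace ContinuousLinearMap

theorem opNorm_le_of_sq_le {𝕜 X Y : Type*} [NontriviallyNormedField 𝕜]
    [SeminormedAddCommGroup X] [NormedSpace 𝕜 X] [SeminormedAddCommGroup Y] [NormedSpace 𝕜 Y]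
    (f : X →L[𝕜] Y) {C : ℝ} (hC : 0 ≤ C) (h : ∀ x, ‖f x‖ ^ 2 ≤ C ^ 2 * ‖x‖ ^ 2) :
    ‖f‖ ≤ C :=
  f.opNorm_le_bound hC fun x => by
    rw [← pow_le_pow_iff_left₀ (norm_nonneg _) (by positivity) two_ne_zero, mul_pow]
    exact h x

section SkewBlock

variable {𝕜 X Y : Type*} [RCLike 𝕜]
  [NormedAddCommGroup X] [InnerProductSpace 𝕜 X] [CompleteSpace X]
  [NormedAddCommGroup Y] [InnerProductSpace 𝕜 Y] [CompleteSpace Y]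

def skewBlock (T : X →L[𝕜] Y) : WithLp 2 (X × Y) →L[𝕜] WithLp 2 (X × Y) :=
  (WithLp.prodContinuousLinearEquiv 2 𝕜 X Y).symm.toContinuousLinearMap ∘L
    ((T.adjoint ∘L WithLp.sndL 2 𝕜 X Y).prod (-T ∘L WithLp.fstL 2 𝕜 X Y))

@[simp]
theorem skewBlock_apply (T : X →L[𝕜] Y) (z : WithLp 2 (X × Y)) :
    skewBlock T z = WithLp.toLp 2 (T.adjoint z.snd, -T z.fst) :=
  rfl

theorem adjoint_skewBlock (T : X →L[𝕜] Y) : (skewBlock T).adjoint = -skewBlock T := by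
  refine ((eq_adjoint_iff _ _).2 fun z w => ?_).symm
  simp only [neg_apply, skewBlock_apply, inner_neg_left, WithLp.prod_inner_apply,
    WithLp.ofLp_fst, WithLp.ofLp_snd, inner_neg_right, adjoint_inner_left, adjoint_inner_right]
  ring

theorem norm_skewBlock_le (T : X →L[𝕜] Y) : ‖skewBlock T‖ ≤ ‖T‖ := by
  refine opNorm_le_of_sq_le _ (norm_nonneg T) fun z => ?_
  rw [skewBlock_apply, WithLp.prod_norm_sq_eq_of_L2, WithLp.prod_norm_sq_eq_of_L2]
  simp only [WithLp.toLp_fst, WithLp.toLp_snd, norm_neg]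
  have hT : ‖T z.fst‖ ≤ ‖T‖ * ‖z.fst‖ := T.le_opNorm _
  have hT' : ‖T.adjoint z.snd‖ ≤ ‖T‖ * ‖z.snd‖ := by
    simpa only [LinearIsometryEquiv.norm_map] using T.adjoint.le_opNorm z.snd
  nlinarith [norm_nonneg (T z.fst), norm_nonneg (T.adjoint z.snd)]

end SkewBlock

section PiL2

variable {𝕜 X ι : Type*} [RCLike 𝕜] {Y : ι → Type*}
  [NormedAddCommGroup X] [InnerProductSpace 𝕜 X]
  [∀ i, NormedAddCommGroup (Y i)] [∀ i, InnerProductSpace 𝕜 (Y i)]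

def piL2 (M : ∀ i, X →L[𝕜] Y i) : X →L[𝕜] PiLp 2 Y :=
  (PiLp.continuousLinearEquiv 2 𝕜 Y).symm.toContinuousLinearMap ∘L pi M

@[simp]
theorem piL2_apply (M : ∀ i, X →L[𝕜] Y i) (x : X) : piL2 M x = WithLp.toLp 2 fun i => M i x :=
  rfl

variable [Fintype ι]

theorem norm_piL2_le (M : ∀ i, X →L[𝕜] Y i) : ‖piL2 M‖ ≤ √(∑ i, ‖M i‖ ^ 2) := by
  refine opNorm_le_of_sq_le _ (Real.sqrt_nonneg _) fun x => ?_
  rw [Real.sq_sqrt (by positivity), piL2_apply, PiLp.norm_sq_eq_of_L2, Finset.sum_mul]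
  gcongr with i
  simpa only [PiLp.toLp_apply, mul_pow] using
    pow_le_pow_left₀ (norm_nonneg _) ((M i).le_opNorm x) 2

variable [CompleteSpace X] [∀ i, CompleteSpace (Y i)]

theorem adjoint_piL2_apply (M : ∀ i, X →L[𝕜] Y i) (y : PiLp 2 Y) :
    (piL2 M).adjoint y = ∑ i, (M i).adjoint (y i) :=
  ext_inner_right 𝕜 fun x => by
    simp only [adjoint_inner_left, piL2_apply, PiLp.inner_apply, sum_inner]

end PiL2

end ContinuousLinearMap

theorem Submodule.norm_starProjection_comp_le {𝕜 X Y : Type*} [RCLike 𝕜]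
    [NormedAddCommGroup X] [InnerProductSpace 𝕜 X] [NormedAddCommGroup Y] [InnerProductSpace 𝕜 Y]
    (V : Submodule 𝕜 Y) [V.HasOrthogonalProjection] (L : X →L[𝕜] Y) :
    ‖V.starProjection ∘L L‖ ≤ ‖L‖ :=
  calc ‖V.starProjection ∘L L‖ ≤ ‖V.starProjection‖ * ‖L‖ :=
        ContinuousLinearMap.opNorm_comp_le _ _
    _ ≤ 1 * ‖L‖ := by gcongr; exact V.starProjection_norm_le
    _ = ‖L‖ := one_mul _

theorem stmt15 (V : ∀ i, Submodule ℝ (G i)) [∀ i, CompleteSpace (V i)]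
    (L : ∀ i, E →L[ℝ] G i) :
    ∃ Lop : WithLp 2 (E × PiLp 2 G) →L[ℝ] WithLp 2 (E × PiLp 2 G),
      (∀ z : WithLp 2 (E × PiLp 2 G),
        Lop z = (WithLp.equiv 2 (E × PiLp 2 G)).symm
          (∑ i, (L i).adjoint
              (Submodule.orthogonalProjectionOnto (V i) ((WithLp.equiv 2 (E × PiLp 2 G) z).2 i) : G i),
           (WithLp.equiv 2 (∀ i, G i)).symm fun i =>
             -(Submodule.orthogonalProjectionOnto (V i)
                 (L i ((WithLp.equiv 2 (E × PiLp 2 G) z).1)) : G i))) ∧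
      ContinuousLinearMap.adjoint Lop = -Lop ∧
      ‖Lop‖ ≤ Real.sqrt (∑ i, ‖L i‖ ^ 2) := by
  let M i := (V i).starProjection ∘L L i
  refine ⟨ContinuousLinearMap.skewBlock (ContinuousLinearMap.piL2 M), fun z => ?_,
    ContinuousLinearMap.adjoint_skewBlock _, (ContinuousLinearMap.norm_skewBlock_le _).trans ?_⟩
  · simp only [ContinuousLinearMap.skewBlock_apply, ContinuousLinearMap.adjoint_piL2_apply,
      ContinuousLinearMap.adjoint_comp, (isSelfAdjoint_starProjection _).adjoint_eq,
      ContinuousLinearMap.comp_apply, ContinuousLinearMap.piL2_apply, M]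
    -- `starProjection` is the coerced `orthogonalProjectionOnto`, and `-toLp f = toLp (-f)`
    rfl
  · refine (ContinuousLinearMap.norm_piL2_le M).trans <| Real.sqrt_le_sqrt <|
      Finset.sum_le_sum fun i _ =>
        pow_le_pow_left₀ (norm_nonneg _) ((V i).norm_starProjection_comp_le (L i)) 2
end
end

section
/- For i ∈ {1,2}, let 𝖧ᵢ and 𝖦ᵢ be real Hilbert spaces, let 𝖢ᵢ ⊆ 𝖧ᵢ be nonempty closed convex, let 𝖫ᵢ : 𝖧ᵢ → 𝖦ᵢ be bounded linear with closed range, let 𝖾ᵢ ∈ 𝖧ᵢ, 𝖻ᵢ = 𝖫ᵢ𝖾ᵢ, and 𝖲ᵢ = {x ∈ 𝖢ᵢ : 𝖫ᵢx = 𝖻ᵢ}. Let 𝖿 : 𝖧₁ × 𝖧₂ → ℝ be Fréchet differentiable with χ-Lipschitzian gradient, such that 𝖿(·, z₂) is convex for every z₂ ∈ 𝖧₂ and 𝖿(z₁, ·) is concave for every z₁ ∈ 𝖧₁, and assume int(𝖢₁ − 𝖾₁) ∩ ker 𝖫₁ ≠ ∅ and int(𝖢₂ − 𝖾₂) ∩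 ker 𝖫₂ ≠ ∅. Define V = ker 𝖫₁ × ker 𝖫₂ ⊆ 𝖧₁ × 𝖧₂, A : (z₁, z₂) ↦ N_{𝖢₁×𝖢₂}(𝖾₁ + z₁, 𝖾₂ + z₂), and B : (z₁, z₂) ↦ (∇₁𝖿(𝖾₁+z₁, 𝖾₂+z₂), −∇₂𝖿(𝖾₁+z₁, 𝖾₂+z₂)), where ∇₁ and ∇₂ denote the partial gradients. Then, for x₁ ∈ 𝖲₁ and x₂ ∈ 𝖲₂, the pair (x₁, x₂) satisfies x₁ ∈ argmin_{z₁ ∈ 𝖲₁} 𝖿(z₁, x₂) and x₂ ∈ argmax_{z₂ ∈ 𝖲₂} 𝖿(x₁, z₂) if and only if 0 ∈ A(x₁ − 𝖾₁, x₂ − 𝖾₂) + B(x₁ − 𝖾₁, x₂ − 𝖾₂) + N_V(x₁ − 𝖾₁, x₂ − 𝖾₂). -/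
/-!
For fixed `x₂`, the point `x₁` minimizes the convex function `f (·, x₂)` over
`S₁ = C₁ ∩ (x₁ + ker L₁)` iff `0 ≤ ⟪∇₁f (x₁, x₂), y - x₁⟫` on `S₁` (first-order condition).
The qualification condition lets this normal-cone condition on `S₁` split as
`-∇₁f (x₁, x₂) ∈ N_{C₁} x₁ + (ker L₁)ᗮ`: separate, in `H₁ × ℝ`, the strict hypograph of
`⟪·, -∇₁f⟫` over `interior (C₁ - x₁)` from `ker L₁ × {0}`; the functional obtained vanishes on
`ker L₁`, and its Riesz representative is the `(ker L₁)ᗮ`-component. The same argument applies to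
`-f (x₁, ·)`, and the two resulting inclusions are the two components of `0 ∈ A + B + N_V`, since
`A`, `B` and `N_V` are all products.
-/

open scoped Pointwise RealInnerProductSpace

def normalCone {E : Type*} [NormedAddCommGroup E] [InnerProductSpace ℝ E] (C : Set E) (x : E) :
    Set E :=
  {v | ∀ y ∈ C, ⟪y - x, v⟫ ≤ 0}

theorem LinearMap.apply_eq_zero_of_le_on_submodule {M : Type*} [AddCommGroup M] [Module ℝ M]
    {K : Submodule ℝ M} (ℓ : M →ₗ[ℝ] ℝ) {α : ℝ} (h : ∀ k ∈ K, α ≤ ℓ k) {k : M} (hk : k ∈ K) :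
    ℓ k = 0 := by
  by_contra hne
  have := h (((α - 1) / ℓ k) • k) (K.smul_mem _ hk)
  rw [map_smul, smul_eq_mul, div_mul_cancel₀ _ hne] at this
  linarith

theorem interior_sub_singleton_inter_nonempty {E R : Type*} [TopologicalSpace E] [AddCommGroup E]
    [IsTopologicalAddGroup E] [Ring R] [Module R E] {C : Set E} {K : Submodule R E} {x e : E}
    (hxe : x - e ∈ K) (h : (interior (C - {e}) ∩ K).Nonempty) :
    (interior (C - {x}) ∩ K).Nonempty := by
  obtain ⟨p, hpC, hpK⟩ := h
  have hC : C - {x} = (e - x) +ᵥ (C - {e}) := by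
    simp only [Set.sub_singleton, ← Set.image_vadd, Set.image_image, vadd_eq_add]
    congr 1
    funext y
    rw [sub_add_sub_cancel']
  refine ⟨(e - x) + p, ?_, K.add_mem ?_ hpK⟩
  · rw [hC, interior_vadd]
    exact Set.vadd_mem_vadd_set hpC
  · simpa using K.neg_mem hxe

section Separation

variable {E : Type*} [TopologicalSpace E] [AddCommGroup E] [Module ℝ E]
  [IsTopologicalAddGroup E] [ContinuousSMul ℝ E]

theorem Convex.subset_of_interior_subset_of_isClosed {D F : Set E} (hD : Convex ℝ D)
    (hD' : (interior D).Nonempty) (hF : IsClosed F) (h : interior D ⊆ F) : D ⊆ F :=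
  subset_closure.trans <|
    hD.closure_interior_eq_closure_of_nonempty_interior hD' ▸ closure_minimal h hF

theorem Convex.exists_eq_zero_on_submodule_le {D : Set E} (hD : Convex ℝ D)
    {K : Submodule ℝ E} (hDK : (interior D ∩ K).Nonempty) (μ : StrongDual ℝ E)
    (hμ : ∀ d ∈ D, d ∈ K → μ d ≤ 0) :
    ∃ ℓ : StrongDual ℝ E, (∀ k ∈ K, ℓ k = 0) ∧ ∀ d ∈ D, μ d ≤ ℓ d := by
  obtain ⟨p, hpD, hpK⟩ := hDK
  -- separate the open strict hypograph `Ω` of `μ` over `interior D` from the subspace `K × {0}`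
  set ψ : StrongDual ℝ (E × ℝ) := .snd ℝ E ℝ - μ.comp (.fst ℝ E ℝ)
  have hψ : ∀ q, ψ q = q.2 - μ q.1 := fun _ => rfl
  set Ω : Set (E × ℝ) := interior D ×ˢ Set.univ ∩ {q | ψ q < 0}
  have hΩ_open : IsOpen Ω :=
    (isOpen_interior.prod isOpen_univ).inter (isOpen_lt ψ.continuous continuous_const)
  have hΩ_convex : Convex ℝ Ω :=
    (hD.interior.prod convex_univ).inter (convex_halfSpace_lt ψ.toLinearMap.isLinear 0)
  have hmem : ∀ d ∈ interior D, ∀ r < μ d, (d, r) ∈ Ω := fun d hd r hr =>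
    ⟨⟨hd, trivial⟩, by simpa [hψ] using hr⟩
  have hdisj : Disjoint Ω (K.prod ⊥ : Submodule ℝ (E × ℝ)) := by
    refine Set.disjoint_left.2 fun q ⟨⟨hq1, _⟩, hq⟩ hqK => ?_
    obtain ⟨hqK1, hqK2⟩ := Submodule.mem_prod.1 hqK
    have hq : q.2 - μ q.1 < 0 := by rwa [← hψ]
    rw [Submodule.mem_bot] at hqK2
    linarith [hμ q.1 (interior_subset hq1) hqK1]
  obtain ⟨φ, α, hφΩ, hφK⟩ :=
    geometric_hahn_banach_open hΩ_convex hΩ_open (Submodule.convex _) hdisj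
  set c : ℝ := φ (0, 1)
  have hφ : ∀ q : E × ℝ, φ q = φ (q.1, 0) + q.2 * c := fun q => by
    conv_lhs => rw [show q = (q.1, 0) + q.2 • ((0 : E), (1 : ℝ)) by ext <;> simp]
    rw [map_add, map_smul, smul_eq_mul]
  have hφK' : ∀ k ∈ K, φ (k, 0) = 0 := fun k hk =>
    (φ.comp (.inl ℝ E ℝ)).toLinearMap.apply_eq_zero_of_le_on_submodule
      (fun k hk => hφK _ (Submodule.mem_prod.2 ⟨hk, Submodule.zero_mem _⟩)) hk
  have hα : α ≤ 0 := by simpa using hφK 0 (Submodule.zero_mem _)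
  -- `c ≤ 0` is impossible at the point `p ∈ interior D ∩ K`, where `φ (p, 0) = 0`
  have hc : 0 < c := by
    by_contra! hc
    have hr : min (μ p - 1) 0 < μ p := (min_le_left _ _).trans_lt (by linarith)
    have := hφΩ _ (hmem p hpD _ hr)
    rw [hφ, hφK' p hpK] at this
    nlinarith [mul_nonneg_of_nonpos_of_nonpos (min_le_right (μ p - 1) 0) hc]
  refine ⟨-c⁻¹ • φ.comp (.inl ℝ E ℝ), fun k hk => by simp [hφK' k hk], ?_⟩
  have hint : ∀ d ∈ interior D, μ d ≤ -c⁻¹ * φ (d, 0) := fun d hd =>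
    le_of_forall_lt fun r hr => by
      have := hφΩ _ (hmem d hd r hr)
      rw [hφ] at this
      rw [show -c⁻¹ * φ (d, 0) = -φ (d, 0) / c by ring, lt_div_iff₀ hc]
      linarith
  exact hD.subset_of_interior_subset_of_isClosed ⟨p, hpD⟩
    (isClosed_le μ.continuous (by fun_prop)) hint

end Separation

section Hilbert

variable {E : Type*} [NormedAddCommGroup E] [InnerProductSpace ℝ E] [CompleteSpace E]

theorem HasGradientAt.neg {h : E → ℝ} {g x : E} (hg : HasGradientAt h g x) :
    HasGradientAt (fun y => -h y) (-g) x := by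
  rw [hasGradientAt_iff_hasFDerivAt, map_neg]
  exact hg.hasFDerivAt.neg

theorem ConvexOn.inner_gradient_le_sub {h : E → ℝ} (hh : ConvexOn ℝ Set.univ h) {x g : E}
    (hg : HasGradientAt h g x) (y : E) : ⟪g, y - x⟫ ≤ h y - h x := by
  have hline : HasDerivAt (h ∘ AffineMap.lineMap (k := ℝ) x y) ⟪g, y - x⟫ 0 := by
    have hg0 : HasFDerivAt h (InnerProductSpace.toDual ℝ E g) (AffineMap.lineMap x y (0 : ℝ)) := by
      simpa using hg.hasFDerivAt
    simpa [InnerProductSpace.toDual_apply_apply] using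
      hg0.comp_hasDerivAt (0 : ℝ) AffineMap.hasDerivAt_lineMap
  simpa [slope_def_field] using
    (hh.comp_affineMap (AffineMap.lineMap x y)).le_slope_of_hasDerivAt
      (Set.mem_univ 0) (Set.mem_univ 1) one_pos hline

theorem ConvexOn.isMinOn_iff_inner_gradient_nonneg {h : E → ℝ} (hh : ConvexOn ℝ Set.univ h)
    {S : Set E} (hS : Convex ℝ S) {x g : E} (hx : x ∈ S) (hg : HasGradientAt h g x) :
    IsMinOn h S x ↔ ∀ y ∈ S, 0 ≤ ⟪g, y - x⟫ := by
  refine ⟨fun hmin y hy => ?_, fun hg' => isMinOn_iff.2 fun y hy => ?_⟩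
  · simpa [InnerProductSpace.toDual_apply_apply] using
      hmin.localize.hasFDerivWithinAt_nonneg hg.hasFDerivAt.hasFDerivWithinAt
        (sub_mem_posTangentConeAt_of_segment_subset (hS.segment_subset hx hy))
  · linarith [hh.inner_gradient_le_sub hg y, hg' y hy]

theorem Convex.exists_mem_orthogonal_inner_sub_nonpos {D : Set E} (hD : Convex ℝ D)
    {K : Submodule ℝ E} (hDK : (interior D ∩ K).Nonempty) {u : E}
    (hu : ∀ d ∈ D, d ∈ K → ⟪d, u⟫ ≤ 0) : ∃ w ∈ Kᗮ, ∀ d ∈ D, ⟪d, u - w⟫ ≤ 0 := by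
  obtain ⟨ℓ, hℓK, hℓD⟩ := hD.exists_eq_zero_on_submodule_le hDK (innerSL ℝ u)
    fun d hd hdK => by simpa [real_inner_comm] using hu d hd hdK
  refine ⟨(InnerProductSpace.toDual ℝ E).symm ℓ, (K.mem_orthogonal _).2 fun k hk => ?_,
    fun d hd => ?_⟩
  · rw [real_inner_comm, InnerProductSpace.toDual_symm_apply, hℓK k hk]
  · rw [inner_sub_right, real_inner_comm ((InnerProductSpace.toDual ℝ E).symm ℓ) d,
      InnerProductSpace.toDual_symm_apply, sub_nonpos, real_inner_comm]
    exact hℓD d hd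

theorem ConvexOn.isMinOn_inter_mk'_iff {C : Set E} (hC : Convex ℝ C) {K : Submodule ℝ E}
    {x : E} (hx : x ∈ C) (hqc : (interior (C - {x}) ∩ K).Nonempty) {h : E → ℝ}
    (hh : ConvexOn ℝ Set.univ h) {g : E} (hg : HasGradientAt h g x) :
    IsMinOn h (C ∩ AffineSubspace.mk' x K) x ↔
      (0 : E) ∈ normalCone C x + {g} + (Kᗮ : Set E) := by
  rw [hh.isMinOn_iff_inner_gradient_nonneg (hC.inter (AffineSubspace.mk' x K).convex)
    ⟨hx, AffineSubspace.self_mem_mk' x K⟩ hg]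
  simp only [Set.mem_inter_iff, SetLike.mem_coe, AffineSubspace.mem_mk', vsub_eq_sub, and_imp]
  constructor
  · intro hfo
    obtain ⟨w, hw, hnormal⟩ := (hC.sub (convex_singleton x)).exists_mem_orthogonal_inner_sub_nonpos
      hqc (u := -g) fun d hd hdK => by
        obtain ⟨y, hy, _, rfl, rfl⟩ := hd
        simpa [inner_neg_right, real_inner_comm] using hfo y hy hdK
    refine ⟨-g - w + g, Set.add_mem_add (fun y hy => ?_) rfl, w, hw, by module⟩
    simpa using hnormal (y - x) (Set.sub_mem_sub hy rfl)
  · rintro ⟨_, ⟨v, hv, g', hg', rfl⟩, w, hw, hsum⟩ y hy hyK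
    rw [Set.mem_singleton_iff] at hg'
    have hg : g = -v - w := by rw [← hg']; linear_combination (norm := module) hsum
    have hwy : ⟪y - x, w⟫ = 0 := (K.mem_orthogonal w).1 hw _ hyK
    rw [hg, real_inner_comm, inner_sub_right, inner_neg_right, hwy]
    linarith [hv y hy]

end Hilbert

section Product

variable {E F : Type*} [NormedAddCommGroup E] [InnerProductSpace ℝ E]
  [NormedAddCommGroup F] [InnerProductSpace ℝ F]

theorem setOf_inner_add_inner_nonpos_eq_normalCone_prod {C : Set E} {D : Set F} {x : E} {y : F}
    (hx : x ∈ C) (hy : y ∈ D) :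
    {u : E × F | ∀ z : E × F, z.1 ∈ C → z.2 ∈ D → ⟪z.1 - x, u.1⟫ + ⟪z.2 - y, u.2⟫ ≤ 0} =
      normalCone C x ×ˢ normalCone D y := by
  ext u
  refine ⟨fun h => ⟨fun z hz => ?_, fun z hz => ?_⟩, fun ⟨h1, h2⟩ z hz1 hz2 => ?_⟩
  · simpa using h (z, y) hz hy
  · simpa using h (x, z) hx hz
  · linarith [h1 _ hz1, h2 _ hz2]

theorem setOf_inner_add_inner_eq_zero_eq_orthogonal_prod (K : Submodule ℝ E)
    (L : Submodule ℝ F) :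
    {u : E × F | ∀ v : E × F, v.1 ∈ K → v.2 ∈ L → ⟪v.1, u.1⟫ + ⟪v.2, u.2⟫ = 0} =
      (Kᗮ : Set E) ×ˢ (Lᗮ : Set F) := by
  ext u
  simp only [Set.mem_ofPred_eq, Set.mem_prod, SetLike.mem_coe, Submodule.mem_orthogonal]
  refine ⟨fun h => ⟨fun k hk => ?_, fun l hl => ?_⟩, fun ⟨h1, h2⟩ v hv1 hv2 => ?_⟩
  · simpa using h (k, 0) hk L.zero_mem
  · simpa using h (0, l) K.zero_mem hl
  · rw [h1 _ hv1, h2 _ hv2, add_zero]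

end Product

variable {H1 H2 G1 G2 : Type*}
  [NormedAddCommGroup H1] [InnerProductSpace ℝ H1] [CompleteSpace H1]
  [NormedAddCommGroup H2] [InnerProductSpace ℝ H2] [CompleteSpace H2]
  [NormedAddCommGroup G1] [InnerProductSpace ℝ G1] [CompleteSpace G1]
  [NormedAddCommGroup G2] [InnerProductSpace ℝ G2] [CompleteSpace G2]

theorem stmt19_general
    (C1 : Set H1) (C2 : Set H2)
    (hC1v : Convex ℝ C1)
    (hC2v : Convex ℝ C2)
    (L1 : H1 →L[ℝ] G1) (L2 : H2 →L[ℝ] G2)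
    (e1 : H1) (e2 : H2)
    (f : H1 × H2 → ℝ)
    -- the partial gradients `∇₁f` and `∇₂f`:
    (g1 : H1 × H2 → H1) (g2 : H1 × H2 → H2)
    (hg1 : ∀ p : H1 × H2, HasGradientAt (fun a => f (a, p.2)) (g1 p) p.1)
    (hg2 : ∀ p : H1 × H2, HasGradientAt (fun b => f (p.1, b)) (g2 p) p.2)
    -- convexity-concavity:
    (hconv : ∀ z2 : H2, ConvexOn ℝ Set.univ (fun z1 => f (z1, z2)))
    (hconc : ∀ z1 : H1, ConcaveOn ℝ Set.univ (fun z2 => f (z1, z2)))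
    -- qualification conditions:
    (hqc1 : (interior (C1 - {e1}) ∩ (LinearMap.ker (L1 : H1 →ₗ[ℝ] G1) : Set H1)).Nonempty)
    (hqc2 : (interior (C2 - {e2}) ∩ (LinearMap.ker (L2 : H2 →ₗ[ℝ] G2) : Set H2)).Nonempty)
    -- the operators `A = N_{C₁×C₂}(e + ·)`, `B` and the normal cone `N_V` to
    -- `V = ker L₁ × ker L₂` (in the direct-sum Hilbert space `H₁ × H₂`):
    (A : H1 × H2 → Set (H1 × H2))
    (hA : ∀ z : H1 × H2, A z = {u | (e1 + z.1 ∈ C1 ∧ e2 + z.2 ∈ C2) ∧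
        ∀ y : H1 × H2, y.1 ∈ C1 → y.2 ∈ C2 →
          ⟪y.1 - (e1 + z.1), u.1⟫ + ⟪y.2 - (e2 + z.2), u.2⟫ ≤ 0})
    (B : H1 × H2 → H1 × H2)
    (hB : ∀ z : H1 × H2, B z = (g1 (e1 + z.1, e2 + z.2), -g2 (e1 + z.1, e2 + z.2)))
    (NV : H1 × H2 → Set (H1 × H2))
    (hNV : ∀ z : H1 × H2, NV z =
        {u | (z.1 ∈ LinearMap.ker (L1 : H1 →ₗ[ℝ] G1) ∧ z.2 ∈ LinearMap.ker (L2 : H2 →ₗ[ℝ] G2)) ∧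
          ∀ v : H1 × H2, v.1 ∈ LinearMap.ker (L1 : H1 →ₗ[ℝ] G1) → v.2 ∈ LinearMap.ker (L2 : H2 →ₗ[ℝ] G2) →
            ⟪v.1, u.1⟫ + ⟪v.2, u.2⟫ = 0})
    -- the strategies:
    (x1 : H1) (x2 : H2)
    (hx1 : x1 ∈ C1 ∧ L1 x1 = L1 e1) (hx2 : x2 ∈ C2 ∧ L2 x2 = L2 e2) :
    ((∀ z1 : H1, z1 ∈ C1 → L1 z1 = L1 e1 → f (x1, x2) ≤ f (z1, x2)) ∧
     (∀ z2 : H2, z2 ∈ C2 → L2 z2 = L2 e2 → f (x1, z2) ≤ f (x1, x2))) ↔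
    (0 : H1 × H2) ∈ A (x1 - e1, x2 - e2) + {B (x1 - e1, x2 - e2)}
        + NV (x1 - e1, x2 - e2) := by
  set K1 := LinearMap.ker (L1 : H1 →ₗ[ℝ] G1)
  set K2 := LinearMap.ker (L2 : H2 →ₗ[ℝ] G2)
  have hxK1 : x1 - e1 ∈ K1 := by simp [K1, hx1.2]
  have hxK2 : x2 - e2 ∈ K2 := by simp [K2, hx2.2]
  have hS1 : ∀ y, y ∈ AffineSubspace.mk' x1 K1 ↔ L1 y = L1 e1 := fun y => by
    simp [K1, AffineSubspace.mem_mk', sub_eq_zero, hx1.2]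
  have hS2 : ∀ y, y ∈ AffineSubspace.mk' x2 K2 ↔ L2 y = L2 e2 := fun y => by
    simp [K2, AffineSubspace.mem_mk', sub_eq_zero, hx2.2]
  have hA' : A (x1 - e1, x2 - e2) = normalCone C1 x1 ×ˢ normalCone C2 x2 := by
    simp only [hA, add_sub_cancel, hx1.1, hx2.1, and_self, true_and]
    exact setOf_inner_add_inner_nonpos_eq_normalCone_prod hx1.1 hx2.1
  have hNV' : NV (x1 - e1, x2 - e2) = (K1ᗮ : Set H1) ×ˢ (K2ᗮ : Set H2) := by
    simp only [hNV, hxK1, hxK2, and_self, true_and]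
    exact setOf_inner_add_inner_eq_zero_eq_orthogonal_prod K1 K2
  have hB' : B (x1 - e1, x2 - e2) = (g1 (x1, x2), -g2 (x1, x2)) := by
    simp only [hB, add_sub_cancel]
  rw [hA', hB', hNV', ← Set.singleton_prod_singleton, Set.prod_add_prod_comm,
    Set.prod_add_prod_comm, Set.mem_prod, Prod.fst_zero, Prod.snd_zero,
    ← (hconv x2).isMinOn_inter_mk'_iff hC1v hx1.1
      (interior_sub_singleton_inter_nonempty hxK1 hqc1) (hg1 (x1, x2)),
    ← (hconc x1).neg.isMinOn_inter_mk'_iff hC2v hx2.1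
      (interior_sub_singleton_inter_nonempty hxK2 hqc2) (hg2 (x1, x2)).neg]
  simp only [isMinOn_iff, Set.mem_inter_iff, SetLike.mem_coe, hS1, hS2, and_imp, Pi.neg_apply,
    neg_le_neg_iff]

theorem stmt19
    (C1 : Set H1) (C2 : Set H2)
    (hC1 : C1.Nonempty) (hC1c : IsClosed C1) (hC1v : Convex ℝ C1)
    (hC2 : C2.Nonempty) (hC2c : IsClosed C2) (hC2v : Convex ℝ C2)
    (L1 : H1 →L[ℝ] G1) (L2 : H2 →L[ℝ] G2)
    (hL1 : IsClosed ((LinearMap.range (L1 : H1 →ₗ[ℝ] G1) : Submodule ℝ G1) : Set G1))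
    (hL2 : IsClosed ((LinearMap.range (L2 : H2 →ₗ[ℝ] G2) : Submodule ℝ G2) : Set G2))
    (e1 : H1) (e2 : H2)
    (χ : ℝ)
    (f : H1 × H2 → ℝ) (hf : Differentiable ℝ f)
    -- the partial gradients `∇₁f` and `∇₂f`:
    (g1 : H1 × H2 → H1) (g2 : H1 × H2 → H2)
    (hg1 : ∀ p : H1 × H2, HasGradientAt (fun a => f (a, p.2)) (g1 p) p.1)
    (hg2 : ∀ p : H1 × H2, HasGradientAt (fun b => f (p.1, b)) (g2 p) p.2)
    -- `∇f = (∇₁f, ∇₂f)` is `χ`-Lipschitzian (ℓ²-product norms):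
    (hglip : ∀ p q : H1 × H2,
      Real.sqrt (‖g1 p - g1 q‖ ^ 2 + ‖g2 p - g2 q‖ ^ 2)
        ≤ χ * Real.sqrt (‖p.1 - q.1‖ ^ 2 + ‖p.2 - q.2‖ ^ 2))
    -- convexity-concavity:
    (hconv : ∀ z2 : H2, ConvexOn ℝ Set.univ (fun z1 => f (z1, z2)))
    (hconc : ∀ z1 : H1, ConcaveOn ℝ Set.univ (fun z2 => f (z1, z2)))
    -- qualification conditions:
    (hqc1 : (interior (C1 - {e1}) ∩ (LinearMap.ker (L1 : H1 →ₗ[ℝ] G1) : Set H1)).Nonempty)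
    (hqc2 : (interior (C2 - {e2}) ∩ (LinearMap.ker (L2 : H2 →ₗ[ℝ] G2) : Set H2)).Nonempty)
    -- the operators `A = N_{C₁×C₂}(e + ·)`, `B` and the normal cone `N_V` to
    -- `V = ker L₁ × ker L₂` (in the direct-sum Hilbert space `H₁ × H₂`):
    (A : H1 × H2 → Set (H1 × H2))
    (hA : ∀ z : H1 × H2, A z = {u | (e1 + z.1 ∈ C1 ∧ e2 + z.2 ∈ C2) ∧
        ∀ y : H1 × H2, y.1 ∈ C1 → y.2 ∈ C2 →
          ⟪y.1 - (e1 + z.1), u.1⟫ + ⟪y.2 - (e2 + z.2), u.2⟫ ≤ 0})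
    (B : H1 × H2 → H1 × H2)
    (hB : ∀ z : H1 × H2, B z = (g1 (e1 + z.1, e2 + z.2), -g2 (e1 + z.1, e2 + z.2)))
    (NV : H1 × H2 → Set (H1 × H2))
    (hNV : ∀ z : H1 × H2, NV z =
        {u | (z.1 ∈ LinearMap.ker (L1 : H1 →ₗ[ℝ] G1) ∧ z.2 ∈ LinearMap.ker (L2 : H2 →ₗ[ℝ] G2)) ∧
          ∀ v : H1 × H2, v.1 ∈ LinearMap.ker (L1 : H1 →ₗ[ℝ] G1) → v.2 ∈ LinearMap.ker (L2 : H2 →ₗ[ℝ] G2) →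
            ⟪v.1, u.1⟫ + ⟪v.2, u.2⟫ = 0})
    -- the strategies:
    (x1 : H1) (x2 : H2)
    (hx1 : x1 ∈ C1 ∧ L1 x1 = L1 e1) (hx2 : x2 ∈ C2 ∧ L2 x2 = L2 e2) :
    ((∀ z1 : H1, z1 ∈ C1 → L1 z1 = L1 e1 → f (x1, x2) ≤ f (z1, x2)) ∧
     (∀ z2 : H2, z2 ∈ C2 → L2 z2 = L2 e2 → f (x1, z2) ≤ f (x1, x2))) ↔
    (0 : H1 × H2) ∈ A (x1 - e1, x2 - e2) + {B (x1 - e1, x2 - e2)}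
        + NV (x1 - e1, x2 - e2) :=
  stmt19_general C1 C2 hC1v hC2v L1 L2 e1 e2 f g1 g2 hg1 hg2 hconv hconc hqc1 hqc2 A hA B hB NV hNV
    x1 x2 hx1 hx2
end
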